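/- arXiv:1507.08212 — 9 statements merged into one kernel-verified Lean document; each statement's English description precedes it below -/
import Mathlib

section
/- Let n ≥ 1 and let d = (d_1,…,d_n) be a nonincreasing list of nonnegative integers, and for each i ∈ {1,…,n} let τ^i be a multiset of nonnegative integers with |τ^i| = d_i, such that every element of every τ^i is equal to d_j for some j ∈ {1,…,n} (i.e., the tableau T = (τ^1,…,τ^n) is feasible). For each value k occurring in d let V_k = {i ∈ {1,…,n} : d_i = k}, and for each i and each value ℓ occurring in d let μ_i^ℓ denote the multiplicity of ℓ in τ^i. Then there exists a simple graph G on vertex set {1,…,n} such that for every i the multiset of degrees in G of the neighbors of vertex i equals τ^i, if and only if both of the following hold: (a) for each value k occurring in d there exists a simple graph on vertex set V_k in which each vertex i ∈ V_k has degree μ_i^k; (b) for each pair of distinct values k, ℓ occurring in d there exists a simple bipartite graph with partite sets V_k and V_ℓ (every edge joining a vertex of V_k to a vertex of V_ℓ) in which each vertex i ∈ V_k has degree μ_i^ℓ and each vertex j ∈ V_ℓ has degree μ_j^k. -/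
/-- The degree of a vertex: the number of its neighbors. -/
noncomputable def deg {V : Type*} (G : SimpleGraph V) (v : V) : ℕ :=
  (G.neighborSet v).ncard

/-- The neighborhood degree list of a vertex `v`: the multiset of the degrees
(in `G`) of the neighbors of `v`. -/
noncomputable def NDL {V : Type*} [Fintype V] (G : SimpleGraph V) (v : V) : Multiset ℕ :=
  ((G.neighborSet v).toFinite.toFinset).val.map (deg G)

/-!
If every vertex `j` has degree `d j`, then `NDL G i = τ i` says exactly that, for every `m`, the
vertex `i` has `count m (τ i)` neighbours in the class `d ⁻¹' {m}`; conversely these counts force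
`deg G i = card (τ i) = d i`. The counts of a vertex of `V_k` towards `V_ℓ` only see the edges
between `V_k` and `V_ℓ`, so a graph with the right counts is the same as an independent choice of
one such "block" for every pair of classes, and blocks realizing (a) and (b) can be glued.
-/

open SimpleGraph

lemma Set.Finite.count_map_toFinset_val {α β : Type*} [DecidableEq β] {s : Set α} (hs : s.Finite)
    (f : α → β) (b : β) : (hs.toFinset.val.map f).count b = (s ∩ f ⁻¹' {b}).ncard := by
  rw [Multiset.count_map, ← Finset.filter_val, Finset.card_val, ← Set.ncard_coe_finset,
    Finset.coe_filter]
  congr 1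
  ext a
  simp [eq_comm]

section Degree

variable {V W : Type*}

lemma deg_map_apply (G : SimpleGraph V) (f : V ↪ W) (v : V) : deg (G.map f) (f v) = deg G v := by
  rw [deg, neighborSet_map, Set.ncard_image_of_injective _ f.injective, deg]

lemma deg_comap_subtypeVal (G : SimpleGraph V) (p : V → Prop) (x : {v // p v}) :
    deg (G.comap Subtype.val) x = (G.neighborSet x ∩ {v | p v}).ncard := by
  rw [deg, neighborSet_comap, ← Set.ncard_image_of_injective _ Subtype.val_injective,
    Set.inter_comm]
  exact congrArg Set.ncard (Subtype.image_preimage_coe {v | p v} _)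

lemma deg_bot (v : V) : deg ⊥ v = 0 := by
  rw [deg, neighborSet_bot, Set.ncard_empty]

end Degree

section NDL

variable {V : Type*} [Fintype V] (G : SimpleGraph V)

lemma card_NDL (v : V) : Multiset.card (NDL G v) = deg G v := by
  rw [NDL, Multiset.card_map, Finset.card_val, ← Set.ncard_eq_toFinset_card, deg]

lemma NDL_eq_iff_ncard_neighborSet_inter {d : V → ℕ} {τ : V → Multiset ℕ}
    (hcard : ∀ v, Multiset.card (τ v) = d v) :
    (∀ v, NDL G v = τ v) ↔ ∀ v m, (G.neighborSet v ∩ d ⁻¹' {m}).ncard = (τ v).count m := by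
  constructor
  · intro h v m
    have hdeg : deg G = d := funext fun w => by rw [← card_NDL, h, hcard]
    rw [← h, NDL, hdeg, Set.Finite.count_map_toFinset_val]
  · intro h
    have hmap : ∀ v, (G.neighborSet v).toFinite.toFinset.val.map d = τ v := fun v =>
      Multiset.ext.2 fun m => by rw [Set.Finite.count_map_toFinset_val, h]
    have hdeg : deg G = d := funext fun w => by
      rw [← hcard, ← hmap, Multiset.card_map, Finset.card_val, ← Set.ncard_eq_toFinset_card, deg]
    intro v
    rw [NDL, hdeg, hmap]

end NDL

section Blocks

variable {V : Type*} (d : V → ℕ) (c : V → ℕ → ℕ)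

/-- `c i m` is the prescribed number of neighbours of `i` in the class `d ⁻¹' {m}`. -/
structure RealizesBlock (k ℓ : ℕ) (H : SimpleGraph V) : Prop where
  adj_classes : ∀ i j, H.Adj i j → d i = k ∧ d j = ℓ ∨ d i = ℓ ∧ d j = k
  deg_left : ∀ i, d i = k → deg H i = c i ℓ
  deg_right : ∀ i, d i = ℓ → deg H i = c i k

lemma realizesBlock_bot {k ℓ : ℕ} (hk : ∀ i, d i = k → c i ℓ = 0)
    (hl : ∀ i, d i = ℓ → c i k = 0) : RealizesBlock d c k ℓ ⊥ where
  adj_classes _ _ h := h.elim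
  deg_left i hi := (deg_bot i).trans (hk i hi).symm
  deg_right i hi := (deg_bot i).trans (hl i hi).symm

lemma realizesBlock_map_subtype {k ℓ : ℕ} {p : V → Prop} (hp : ∀ i, d i = k ∨ d i = ℓ → p i)
    (B : SimpleGraph {i // p i})
    (hadj : ∀ x y, B.Adj x y → d x.1 = k ∧ d y.1 = ℓ ∨ d x.1 = ℓ ∧ d y.1 = k)
    (hk : ∀ x : {i // p i}, d x.1 = k → deg B x = c x ℓ)
    (hl : ∀ x : {i // p i}, d x.1 = ℓ → deg B x = c x k) :
    RealizesBlock d c k ℓ (B.map (Function.Embedding.subtype p)) where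
  adj_classes := by
    rintro _ _ ⟨-, x, y, hxy, rfl, rfl⟩
    exact hadj x y hxy
  deg_left i hi :=
    (deg_map_apply B _ ⟨i, hp i (.inl hi)⟩).trans (hk ⟨i, hp i (.inl hi)⟩ hi)
  deg_right i hi :=
    (deg_map_apply B _ ⟨i, hp i (.inr hi)⟩).trans (hl ⟨i, hp i (.inr hi)⟩ hi)

/-- Vertices `i` and `j` are adjacent when they are adjacent in the block of the classes
`d i` and `d j`; ordering the pair by `min` and `max` makes this symmetric. -/
def glueBlocks (E : ℕ → ℕ → SimpleGraph V) : SimpleGraph V where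
  Adj i j := (E (min (d i) (d j)) (max (d i) (d j))).Adj i j
  symm := ⟨fun i j h => by rw [min_comm, max_comm]; exact h.symm⟩
  loopless := ⟨fun i => (E _ _).loopless.irrefl i⟩

variable {d c}

lemma neighborSet_glueBlocks_inter {E : ℕ → ℕ → SimpleGraph V}
    (hE : ∀ k ℓ, RealizesBlock d c k ℓ (E k ℓ)) (i : V) (m : ℕ) :
    (glueBlocks d E).neighborSet i ∩ d ⁻¹' {m} =
      (E (min (d i) m) (max (d i) m)).neighborSet i := by
  ext j
  constructor
  · rintro ⟨hij, rfl : d j = m⟩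
    exact hij
  · intro hij
    have hj : d j = m := by
      rcases (hE _ _).adj_classes i j hij with ⟨h1, h2⟩ | ⟨h1, h2⟩ <;> omega
    refine ⟨?_, hj⟩
    change (E _ _).Adj i j
    rwa [hj]

lemma exists_ncard_neighborSet_inter_eq (hblock : ∀ k ℓ, ∃ H, RealizesBlock d c k ℓ H) :
    ∃ G : SimpleGraph V, ∀ i m, (G.neighborSet i ∩ d ⁻¹' {m}).ncard = c i m := by
  choose E hE using hblock
  refine ⟨glueBlocks d E, fun i m => ?_⟩
  rw [neighborSet_glueBlocks_inter hE]
  rcases le_total (d i) m with h | h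
  · rw [min_eq_left h, max_eq_right h]
    exact (hE _ _).deg_left i rfl
  · rw [min_eq_right h, max_eq_left h]
    exact (hE _ _).deg_right i rfl

end Blocks

lemma exists_bipartite_restriction {V : Type*} (G : SimpleGraph V) (d : V → ℕ) {k ℓ : ℕ}
    (hkl : k ≠ ℓ) :
    ∃ B : SimpleGraph {i // d i = k ∨ d i = ℓ},
      (∀ x y, B.Adj x y → d x.1 = k ∧ d y.1 = ℓ ∨ d x.1 = ℓ ∧ d y.1 = k) ∧
      (∀ x, d x.1 = k → deg B x = (G.neighborSet x ∩ d ⁻¹' {ℓ}).ncard) ∧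
      (∀ x, d x.1 = ℓ → deg B x = (G.neighborSet x ∩ d ⁻¹' {k}).ncard) := by
  refine ⟨(G ⊓ (⊤ : SimpleGraph ℕ).comap d).comap Subtype.val, ?_, fun x hx => ?_, fun x hx => ?_⟩
  · rintro ⟨x, hx⟩ ⟨y, hy⟩ ⟨-, hxy : d x ≠ d y⟩
    dsimp only
    omega
  all_goals
    rw [deg_comap_subtypeVal]
    congr 1
    ext j
    simp only [Set.mem_inter_iff, inf_adj, comap_adj, top_adj, mem_neighborSet, Set.mem_ofPred_eq,
      Set.mem_preimage, Set.mem_singleton_iff]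
    rw [and_assoc]
    exact and_congr_right fun _ => by omega

theorem stmt0_general (n : ℕ) (d : Fin n → ℕ)
    (τ : Fin n → Multiset ℕ) (hcard : ∀ i, Multiset.card (τ i) = d i)
    (hfeas : ∀ i, ∀ x ∈ τ i, ∃ j, d j = x) :
    (∃ G : SimpleGraph (Fin n), ∀ i, NDL G i = τ i) ↔
      ((∀ k : ℕ, (∃ j, d j = k) →
          ∃ Gk : SimpleGraph {i : Fin n // d i = k},
            ∀ x : {i : Fin n // d i = k}, deg Gk x = Multiset.count k (τ x.1)) ∧
       (∀ k ℓ : ℕ, k ≠ ℓ → (∃ j, d j = k) → (∃ j, d j = ℓ) →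
          ∃ B : SimpleGraph {i : Fin n // d i = k ∨ d i = ℓ},
            (∀ x y, B.Adj x y →
                (d x.1 = k ∧ d y.1 = ℓ) ∨ (d x.1 = ℓ ∧ d y.1 = k)) ∧
            (∀ x : {i : Fin n // d i = k ∨ d i = ℓ}, d x.1 = k →
               deg B x = Multiset.count ℓ (τ x.1)) ∧
            (∀ x : {i : Fin n // d i = k ∨ d i = ℓ}, d x.1 = ℓ →
               deg B x = Multiset.count k (τ x.1)))) := by
  refine (exists_congr fun G => NDL_eq_iff_ncard_neighborSet_inter G hcard).trans ⟨?_, ?_⟩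
  · rintro ⟨G, hG⟩
    refine ⟨fun k _ => ⟨G.comap Subtype.val, fun x => (deg_comap_subtypeVal G _ x).trans
      (hG x k)⟩, fun k ℓ hkl _ _ => ?_⟩
    obtain ⟨B, hadj, hk, hl⟩ := exists_bipartite_restriction G d hkl
    exact ⟨B, hadj, fun x hx => (hk x hx).trans (hG x ℓ), fun x hx => (hl x hx).trans (hG x k)⟩
  · rintro ⟨hclass, hbip⟩
    have hcount_zero : ∀ i m, (¬∃ j, d j = m) → (τ i).count m = 0 := fun i m hm =>
      Multiset.count_eq_zero.2 fun hmem => hm (hfeas i m hmem)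
    refine exists_ncard_neighborSet_inter_eq fun k ℓ => ?_
    by_cases hk : ∃ j, d j = k
    · by_cases hl : ∃ j, d j = ℓ
      · rcases eq_or_ne k ℓ with rfl | hkl
        · obtain ⟨Gk, hGk⟩ := hclass k hk
          exact ⟨_, realizesBlock_map_subtype d _ (fun _ => or_self_iff.1) Gk
            (fun x y _ => .inl ⟨x.2, y.2⟩) (fun x _ => hGk x) (fun x _ => hGk x)⟩
        · obtain ⟨B, hadj, hBk, hBl⟩ := hbip k ℓ hkl hk hl
          exact ⟨_, realizesBlock_map_subtype d _ (fun _ => id) B hadj hBk hBl⟩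
      · exact ⟨⊥, realizesBlock_bot d _ (fun i _ => hcount_zero i ℓ hl)
          (fun i hi => absurd ⟨i, hi⟩ hl)⟩
    · exact ⟨⊥, realizesBlock_bot d _ (fun i hi => absurd ⟨i, hi⟩ hk)
        (fun i _ => hcount_zero i k hk)⟩

/-- A feasible tableau is the NDL of a simple graph iff each `D^k` is graphic and
each `D^{k,ℓ}` is graphic as a bipartitioned degree sequence. -/
theorem stmt0 (n : ℕ) (hn : 1 ≤ n) (d : Fin n → ℕ) (hmono : Antitone d)
    (τ : Fin n → Multiset ℕ) (hcard : ∀ i, Multiset.card (τ i) = d i)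
    (hfeas : ∀ i, ∀ x ∈ τ i, ∃ j, d j = x) :
    (∃ G : SimpleGraph (Fin n), ∀ i, NDL G i = τ i) ↔
      ((∀ k : ℕ, (∃ j, d j = k) →
          ∃ Gk : SimpleGraph {i : Fin n // d i = k},
            ∀ x : {i : Fin n // d i = k}, deg Gk x = Multiset.count k (τ x.1)) ∧
       (∀ k ℓ : ℕ, k ≠ ℓ → (∃ j, d j = k) → (∃ j, d j = ℓ) →
          ∃ B : SimpleGraph {i : Fin n // d i = k ∨ d i = ℓ},
            (∀ x y, B.Adj x y →
                (d x.1 = k ∧ d y.1 = ℓ) ∨ (d x.1 = ℓ ∧ d y.1 = k)) ∧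
            (∀ x : {i : Fin n // d i = k ∨ d i = ℓ}, d x.1 = k →
               deg B x = Multiset.count ℓ (τ x.1)) ∧
            (∀ x : {i : Fin n // d i = k ∨ d i = ℓ}, d x.1 = ℓ →
               deg B x = Multiset.count k (τ x.1)))) :=
  stmt0_general n d τ hcard hfeas
end

section
/- Let d = (d_1,…,d_n) be a list of nonnegative integers in nonincreasing order whose sum is even, and let m(d) = max{i : d_i ≥ i−1}. Then d is the degree sequence of a simple graph if and only if for every k ∈ {1,…,m(d)} one has Σ_{i=1}^k d_i ≤ k(k−1) + Σ_{i=k+1}^n min{k, d_i}. -/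
open Finset

section Degree

open SimpleGraph

variable {V : Type*}

def IsGraphic (d : V → ℕ) : Prop :=
  ∃ G : SimpleGraph V, deg G = d

theorem isGraphic_zero : IsGraphic (0 : V → ℕ) :=
  ⟨⊥, funext fun v => by simp [deg]⟩

variable (G : SimpleGraph V)

theorem deg_eq_degree [Fintype V] [DecidableRel G.Adj] (v : V) : deg G v = G.degree v := by
  rw [deg, ← Nat.card_coe_set_eq, Nat.card_eq_fintype_card, card_neighborSet_eq_degree]

theorem SimpleGraph.sum_degree_le [Fintype V] [DecidableEq V] [DecidableRel G.Adj]
    (S : Finset V) :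
    ∑ v ∈ S, G.degree v ≤ #S * (#S - 1) + ∑ v ∈ Sᶜ, min #S (G.degree v) := by
  have hsplit (v : V) :
      G.degree v = #(S.bipartiteAbove G.Adj v) + #(Sᶜ.bipartiteAbove G.Adj v) := by
    rw [← card_neighborFinset_eq_degree, neighborFinset_eq_filter, bipartiteAbove,
      bipartiteAbove, card_filter, card_filter, card_filter, sum_add_sum_compl]
  rw [sum_congr rfl fun v _ => hsplit v, sum_add_distrib,
    sum_card_bipartiteAbove_eq_sum_card_bipartiteBelow G.Adj (t := Sᶜ)]
  gcongr with v hv w hw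
  · calc ∑ v ∈ S, #(S.bipartiteAbove G.Adj v) ≤ #S • (#S - 1) := by
          refine sum_le_card_nsmul _ _ _ fun v hv => ?_
          rw [← card_erase_of_mem hv]
          exact card_le_card fun w hw => by
            simp only [mem_bipartiteAbove] at hw
            exact mem_erase.mpr ⟨hw.2.ne', hw.1⟩
      _ = #S * (#S - 1) := smul_eq_mul _ _
  · refine le_min (card_le_card (filter_subset _ _)) ?_
    rw [← card_neighborFinset_eq_degree]
    exact card_le_card fun u hu => by
      simp only [mem_bipartiteBelow] at hu
      exact (mem_neighborFinset _ _ _).mpr hu.2.symm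

variable [Finite V]

theorem deg_sup_edge_left {a b : V} (hab : a ≠ b) (h : ¬G.Adj a b) :
    deg (G ⊔ edge a b) a = deg G a + 1 := by
  have : (G ⊔ edge a b).neighborSet a = insert b (G.neighborSet a) := by
    ext w
    simp only [mem_neighborSet, sup_adj, edge_adj, Set.mem_insert_iff]
    grind
  rw [deg, this, Set.ncard_insert_of_notMem (show b ∉ G.neighborSet a from h), deg]

theorem deg_sup_edge [DecidableEq V] {a b : V} (hab : a ≠ b) (h : ¬G.Adj a b) :
    deg (G ⊔ edge a b) = deg G + Pi.single a 1 + Pi.single b 1 := by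
  funext v
  by_cases hva : v = a
  · subst hva
    simp [deg_sup_edge_left G hab h, hab]
  by_cases hvb : v = b
  · subst hvb
    rw [edge_comm, deg_sup_edge_left G (Ne.symm hab) (fun h' => h h'.symm)]
    simp [hva]
  have : (G ⊔ edge a b).neighborSet v = G.neighborSet v := by
    ext w
    simp [edge_adj, hva, hvb]
  simp [deg, this, hva, hvb]

theorem exists_not_adj_of_deg_add_one_lt {s : V} (S : Finset V) (h : deg G s + 1 < #S) :
    ∃ u ∈ S, u ≠ s ∧ ¬G.Adj s u := by
  by_contra! hS
  have hsub : (S : Set V) ⊆ insert s (G.neighborSet s) := fun u hu => by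
    by_cases hus : u = s
    · exact Or.inl hus
    · exact Or.inr (hS u hu hus)
  have h1 := Set.ncard_le_ncard hsub
  have h2 := Set.ncard_insert_le s (G.neighborSet s)
  rw [Set.ncard_coe_finset] at h1
  rw [deg] at h
  omega

theorem exists_adj_not_adj_of_deg_lt {s t u : V} (hst : G.Adj s t) (hsu : ¬G.Adj s u)
    (hdeg : deg G t < deg G u) : ∃ v, G.Adj u v ∧ v ≠ t ∧ ¬G.Adj t v := by
  by_contra! h
  have hsub : G.neighborSet u ⊆ insert t (G.neighborSet t \ {s}) := fun v hv => by
    by_cases hvt : v = t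
    · exact Or.inl hvt
    · refine Or.inr ⟨h v hv hvt, ?_⟩
      rintro rfl
      exact hsu hv.symm
  have h1 := Set.ncard_le_ncard hsub
  have h2 := Set.ncard_insert_le t (G.neighborSet t \ {s})
  have h3 := Set.ncard_sdiff_singleton_of_mem (show s ∈ G.neighborSet t from hst.symm)
  have h4 : 0 < deg G t := (Set.ncard_pos).mpr ⟨s, hst.symm⟩
  rw [deg, deg] at hdeg
  rw [deg] at h4
  omega

theorem exists_deg_eq_add_single_add_single [DecidableEq V] {s t : V} (hst : s ≠ t)
    (h : G.Adj s t → ∃ u, u ≠ s ∧ ¬G.Adj s u ∧ deg G t < deg G u) :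
    ∃ H : SimpleGraph V, deg H = deg G + Pi.single s 1 + Pi.single t 1 := by
  by_cases hadj : G.Adj s t
  swap
  · exact ⟨G ⊔ edge s t, deg_sup_edge G hst hadj⟩
  obtain ⟨u, hus, hsu, hdeg⟩ := h hadj
  obtain ⟨v, huv, hvt, htv⟩ := exists_adj_not_adj_of_deg_lt G hadj hsu hdeg
  have hut : u ≠ t := by
    rintro rfl
    exact lt_irrefl _ hdeg
  have hdel : deg (G \ edge u v) + Pi.single u 1 + Pi.single v 1 = deg G := by
    rw [← deg_sup_edge _ huv.ne (by simp [sdiff_adj, edge_adj, huv.ne]),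
      sdiff_sup_cancel ((edge_le_iff G).mpr (Or.inr huv))]
  refine ⟨G \ edge u v ⊔ edge s u ⊔ edge t v, ?_⟩
  rw [deg_sup_edge _ (Ne.symm hvt) ?_, deg_sup_edge _ (Ne.symm hus) ?_, ← hdel]
  · abel
  · simp [sdiff_adj, hsu]
  · simp [sdiff_adj, edge_adj, htv, hst.symm, hut.symm]

end Degree

namespace Fin

variable {n : ℕ}

theorem card_filter_val_le {k : ℕ} (hk : k < n) : #{i : Fin n | (i : ℕ) ≤ k} = k + 1 := by
  simp_rw [← Nat.lt_succ_iff, Fin.card_filter_val_lt]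
  omega

theorem sum_filter_val_le_succ {M : Type*} [AddCommMonoid M] (f : Fin n → M) {k : ℕ}
    (hk : k + 1 < n) :
    ∑ i ∈ {i : Fin n | (i : ℕ) ≤ k + 1}, f i =
      ∑ i ∈ {i : Fin n | (i : ℕ) ≤ k}, f i + f ⟨k + 1, hk⟩ := by
  have : ({i | (i : ℕ) ≤ k + 1} : Finset (Fin n)) =
      insert ⟨k + 1, hk⟩ ({i | (i : ℕ) ≤ k} : Finset (Fin n)) := by
    ext i
    simp only [mem_filter, mem_univ, true_and, mem_insert, Fin.ext_iff]
    omega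
  rw [this, sum_insert (by simp), add_comm]

theorem sum_filter_lt_val_eq_add {M : Type*} [AddCommMonoid M] (f : Fin n → M) {k : ℕ}
    (hk : k + 1 < n) :
    ∑ i ∈ {i : Fin n | k < (i : ℕ)}, f i =
      f ⟨k + 1, hk⟩ + ∑ i ∈ {i : Fin n | k + 1 < (i : ℕ)}, f i := by
  have : ({i | k < (i : ℕ)} : Finset (Fin n)) =
      insert ⟨k + 1, hk⟩ ({i | k + 1 < (i : ℕ)} : Finset (Fin n)) := by
    ext i
    simp only [mem_filter, mem_univ, true_and, mem_insert, Fin.ext_iff]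
    omega
  rw [this, sum_insert (by simp)]

end Fin

namespace ErdosGallai

variable {n : ℕ}

/- `lhs d k ≤ rhs d k` is the inequality for the first `k + 1` entries: `k` is a 0-based
position. -/

def lhs (d : Fin n → ℕ) (k : ℕ) : ℕ :=
  ∑ i ∈ {i : Fin n | (i : ℕ) ≤ k}, d i

def rhs (d : Fin n → ℕ) (k : ℕ) : ℕ :=
  (k + 1) * k + ∑ i ∈ {i : Fin n | k < (i : ℕ)}, min (k + 1) (d i)

theorem lhs_succ (d : Fin n → ℕ) {k : ℕ} (hk : k + 1 < n) :
    lhs d (k + 1) = lhs d k + d ⟨k + 1, hk⟩ :=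
  Fin.sum_filter_val_le_succ d hk

theorem rhs_eq_add_min_apply_succ (d : Fin n → ℕ) {k : ℕ} (hk : k + 1 < n) :
    rhs d k = (k + 1) * k + min (k + 1) (d ⟨k + 1, hk⟩) +
      ∑ i ∈ {i : Fin n | k + 1 < (i : ℕ)}, min (k + 1) (d i) := by
  rw [rhs, Fin.sum_filter_lt_val_eq_add _ hk, add_assoc]

theorem lhs_add_single (f : Fin n → ℕ) (j : Fin n) (k : ℕ) :
    lhs (f + Pi.single j 1) k = lhs f k + if (j : ℕ) ≤ k then 1 else 0 := by
  simp [lhs, sum_add_distrib, sum_pi_single']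

theorem rhs_add_single (f : Fin n → ℕ) (j : Fin n) (k : ℕ) :
    rhs (f + Pi.single j 1) k = rhs f k + if k < (j : ℕ) ∧ f j ≤ k then 1 else 0 := by
  have hmin (i : Fin n) : min (k + 1) ((f + Pi.single j 1 : Fin n → ℕ) i) =
      min (k + 1) (f i) + (Pi.single j (if f j ≤ k then 1 else 0) : Fin n → ℕ) i := by
    rcases eq_or_ne i j with rfl | hij
    · simp only [Pi.add_apply, Pi.single_eq_same]
      split_ifs <;> omega
    · simp [hij]
  simp only [rhs, hmin, sum_add_distrib, sum_pi_single', mem_filter, mem_univ, true_and, ite_and]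
  ring

theorem lhs_add_rhs_of_forall_le {d : Fin n → ℕ} {k : ℕ}
    (h : ∀ i : Fin n, k < (i : ℕ) → d i ≤ k + 1) :
    lhs d k + rhs d k = (k + 1) * k + ∑ i, d i := by
  rw [rhs, sum_congr rfl fun i hi => min_eq_right (h i (mem_filter.mp hi).2),
    ← sum_filter_add_sum_filter_not univ (fun i : Fin n => (i : ℕ) ≤ k) d, lhs]
  simp_rw [not_le]
  ring

theorem lhs_add_two_le_rhs {d : Fin n → ℕ} {k : ℕ} (heven : Even (∑ i, d i)) {s t : Fin n}
    (hst : s ≠ t) (hks : k < s) (hkt : k < t) (hmax : ∀ i, d i ≤ d s) (hs : d s ≤ k + 1)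
    (ht : 0 < d t) : lhs d k + 2 ≤ rhs d k := by
  have hL : lhs d k ≤ (k + 1) * d s := by
    rw [← Fin.card_filter_val_le (hks.trans s.isLt), ← smul_eq_mul]
    exact sum_le_card_nsmul _ _ _ fun i _ => hmax i
  have hR : (k + 1) * k + (d s + d t) ≤ rhs d k := by
    have hsub : ({s, t} : Finset (Fin n)) ⊆ ({i | k < (i : ℕ)} : Finset (Fin n)) := by
      simp [insert_subset_iff, hks, hkt]
    calc (k + 1) * k + (d s + d t)
        = (k + 1) * k + ∑ i ∈ {s, t}, min (k + 1) (d i) := by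
          rw [sum_pair hst, min_eq_right hs, min_eq_right ((hmax t).trans hs)]
      _ ≤ rhs d k := Nat.add_le_add_left (sum_le_sum_of_subset hsub) _
  have hpar : Even (lhs d k + rhs d k) := by
    rw [lhs_add_rhs_of_forall_le fun i _ => (hmax i).trans hs]
    exact (mul_comm k (k + 1) ▸ Nat.even_mul_succ_self k).add heven
  have hlt : lhs d k < rhs d k := by nlinarith [Nat.mul_le_mul_left k hs]
  obtain ⟨m, hm⟩ := hpar
  omega

theorem lhs_succ_le_rhs_succ {d : Fin n → ℕ} {k : ℕ} (hk : k + 1 < n)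
    (hd : d ⟨k + 1, hk⟩ ≤ k + 1)
    (h : lhs d k ≤ rhs d k) : lhs d (k + 1) ≤ rhs d (k + 1) := by
  have hS : ∑ i ∈ {i : Fin n | k + 1 < (i : ℕ)}, min (k + 1) (d i) ≤
      ∑ i ∈ {i : Fin n | k + 1 < (i : ℕ)}, min (k + 1 + 1) (d i) :=
    sum_le_sum fun i _ => min_le_min_right _ (by omega)
  rw [rhs_eq_add_min_apply_succ d hk, min_eq_right hd] at h
  rw [lhs_succ d hk, rhs]
  nlinarith

theorem lhs_lt_rhs_of_lhs_succ_le {d : Fin n → ℕ} {k c : ℕ} (hk : k + 1 < n)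
    (hconst : ∀ i : Fin n, (i : ℕ) ≤ k + 1 → d i = c) (hc : k + 1 ≤ c) {t : Fin n}
    (hkt : k + 1 < t) (ht : 0 < d t) (htk : d t ≤ k + 1)
    (h : lhs d (k + 1) ≤ rhs d (k + 1)) : lhs d k < rhs d k := by
  have hL : lhs d k = (k + 1) * c := by
    rw [lhs, sum_congr rfl fun i hi => hconst i ((mem_filter.mp hi).2.trans k.le_succ), sum_const,
      Fin.card_filter_val_le (by omega), smul_eq_mul]
  have hL' : lhs d (k + 1) = (k + 1 + 1) * c := by
    rw [lhs_succ d hk, hL, hconst _ le_rfl]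
    ring
  have hR : rhs d k = (k + 1) * k + (k + 1) +
      ∑ i ∈ {i : Fin n | k + 1 < (i : ℕ)}, min (k + 1) (d i) := by
    rw [rhs_eq_add_min_apply_succ d hk, hconst _ le_rfl, min_eq_left hc]
  -- `(k + 1) * min (k + 2) x ≤ (k + 2) * min (k + 1) x`, strictly for `x = d t ∈ [1, k + 1]`
  have hmin : (k + 1) * ∑ i ∈ {i : Fin n | k + 1 < (i : ℕ)}, min (k + 1 + 1) (d i) <
      (k + 1 + 1) * ∑ i ∈ {i : Fin n | k + 1 < (i : ℕ)}, min (k + 1) (d i) := by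
    rw [mul_sum, mul_sum]
    refine sum_lt_sum (fun i _ => ?_) ⟨t, by simpa using hkt, ?_⟩
    · rcases le_or_gt (d i) (k + 1) with hi | hi
      · rw [min_eq_right hi, min_eq_right (by omega)]
        nlinarith
      · rw [min_eq_left hi, min_eq_left hi.le, mul_comm]
    · rw [min_eq_right htk, min_eq_right (by omega)]
      nlinarith
  have : (k + 1 + 1) * lhs d k < (k + 1 + 1) * rhs d k := by
    rw [hL', rhs] at h
    rw [hL, hR]
    nlinarith [Nat.mul_le_mul_left (k + 1) h]
  exact Nat.lt_of_mul_lt_mul_left this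

theorem rhs_zero_le {d : Fin n → ℕ} {t : Fin n} (ht : ∀ i, t < i → d i = 0) :
    rhs d 0 ≤ t := by
  have hn : 0 < n := t.pos
  have hsupp : ({i | 0 < (i : ℕ)} : Finset (Fin n)).filter (· ≤ t) = Ioc ⟨0, hn⟩ t := by
    ext i
    simp [Fin.lt_def]
  simp only [rhs, zero_add, mul_zero]
  rw [← sum_filter_of_ne (p := (· ≤ t))
    fun i _ h => not_lt.mp fun hti => h (by simp [ht i hti]), hsupp]
  calc ∑ i ∈ Ioc ⟨0, hn⟩ t, min 1 (d i) ≤ #(Ioc ⟨0, hn⟩ t) • 1 :=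
        sum_le_card_nsmul _ _ _ fun i _ => min_le_left _ _
    _ = t := by simp

end ErdosGallai

open ErdosGallai

section Sequences

variable {n : ℕ}

def SatisfiesErdosGallai (d : Fin n → ℕ) : Prop :=
  ∀ k < n, lhs d k ≤ rhs d k

theorem IsGraphic.satisfiesErdosGallai {d : Fin n → ℕ} (hd : IsGraphic d) :
    SatisfiesErdosGallai d := by
  classical
  obtain ⟨G, rfl⟩ := hd
  intro k hk
  have hS := G.sum_degree_le {i | (i : ℕ) ≤ k}
  rw [Fin.card_filter_val_le hk, Nat.add_sub_cancel, compl_filter] at hS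
  simp_rw [not_le] at hS
  simpa only [lhs, rhs, deg_eq_degree, mul_comm] using hS

theorem satisfiesErdosGallai_of_forall_le_apply {d : Fin n → ℕ}
    (h : ∀ k : Fin n, (k : ℕ) ≤ d k → lhs d k ≤ rhs d k) : SatisfiesErdosGallai d := by
  intro k hk
  induction k with
  | zero => exact h ⟨0, hk⟩ (Nat.zero_le _)
  | succ k ih =>
    by_cases hkd : k + 1 ≤ d ⟨k + 1, hk⟩
    · exact h ⟨k + 1, hk⟩ hkd
    · exact lhs_succ_le_rhs_succ hk (by omega) (ih (by omega))

theorem SatisfiesErdosGallai.of_add_single_add_single {d d' : Fin n → ℕ} {s t : Fin n}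
    (hd : d = d' + Pi.single s 1 + Pi.single t 1) (hst : s < t) (hmono : Antitone d)
    (hmax : ∀ i, d i ≤ d s) (heven : Even (∑ i, d i)) (hEG : SatisfiesErdosGallai d) :
    SatisfiesErdosGallai d' := by
  have hst' : (s : ℕ) < t := hst
  have hds : d s = d' s + 1 := by simp [hd, hst.ne]
  have hdt : d t = d' t + 1 := by simp [hd, hst.ne']
  intro k hk
  have hL : lhs d k = lhs d' k + (if (s : ℕ) ≤ k then 1 else 0) +
      (if (t : ℕ) ≤ k then 1 else 0) := by
    rw [hd, lhs_add_single, lhs_add_single]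
  have hR : rhs d k = rhs d' k + (if k < (s : ℕ) ∧ d' s ≤ k then 1 else 0) +
      (if k < (t : ℕ) ∧ d' t ≤ k then 1 else 0) := by
    rw [hd, rhs_add_single, rhs_add_single]
    simp [hst.ne']
  have hEGk := hEG k hk
  by_cases hs_le : (s : ℕ) ≤ k
  · split_ifs at hL hR <;> omega
  by_cases hds_le : d' s ≤ k
  · have := lhs_add_two_le_rhs (k := k) heven hst.ne (by omega) (by omega) hmax (by omega)
      (by omega)
    split_ifs at hL hR <;> omega
  by_cases hdt_le : d' t ≤ k
  · have hconst (i : Fin n) (hi : (i : ℕ) ≤ k + 1) : d i = d s :=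
      le_antisymm (hmax i) (hmono (Fin.le_iff_val_le_val.mpr (by omega)))
    have := lhs_lt_rhs_of_lhs_succ_le (k := k) (by omega) hconst (by omega) (t := t) (by omega)
      (by omega) (by omega) (hEG (k + 1) (by omega))
    split_ifs at hL hR <;> omega
  · split_ifs at hL hR <;> omega

theorem antitone_sub_single_sub_single {d : Fin n → ℕ} (hmono : Antitone d) {s t : Fin n}
    (hst : s < t) (hs : ∀ j, s < j → j < t → d j < d s) (ht : ∀ j, t < j → d j = 0) :
    Antitone (d - Pi.single s 1 - Pi.single t 1) := by
  intro i j hij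
  rcases hij.eq_or_lt with rfl | hij
  · rfl
  have := hmono hij.le
  have := hmono hst.le
  simp only [Pi.sub_apply, Pi.single_apply]
  split_ifs <;> subst_vars <;> grind

theorem exists_eq_add_single_add_single {d : Fin n → ℕ} (hmono : Antitone d)
    (hEG : SatisfiesErdosGallai d) (hd : d ≠ 0) :
    ∃ (d' : Fin n → ℕ) (s t : Fin n), d = d' + Pi.single s 1 + Pi.single t 1 ∧ s < t ∧
      (∀ i, d i ≤ d s) ∧ d' s < t ∧ Antitone d' := by
  obtain ⟨i₀, hi₀⟩ := Function.ne_iff.mp hd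
  have hn : 0 < n := i₀.pos
  have hmax (i : Fin n) : d i ≤ d ⟨0, hn⟩ := hmono (Fin.le_def.mpr (Nat.zero_le _))
  obtain ⟨t, ht, htmax⟩ := ({i | 0 < d i} : Finset (Fin n)).exists_max_image id
    ⟨i₀, by simpa [Nat.pos_iff_ne_zero] using hi₀⟩
  simp only [mem_filter, mem_univ, true_and, id] at ht htmax
  have hzero (j : Fin n) (hj : t < j) : d j = 0 := by
    by_contra h
    exact hj.not_ge (htmax j (Nat.pos_of_ne_zero h))
  have hzt : d ⟨0, hn⟩ ≤ t :=
    calc d ⟨0, hn⟩ ≤ lhs d 0 := single_le_sum (fun _ _ => Nat.zero_le _) (by simp)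
      _ ≤ rhs d 0 := hEG 0 hn
      _ ≤ t := rhs_zero_le hzero
  obtain ⟨s, hs, hsmax⟩ :=
    ({i | i < t ∧ d i = d ⟨0, hn⟩} : Finset (Fin n)).exists_max_image id
    ⟨⟨0, hn⟩, by
      simp only [mem_filter, mem_univ, true_and, and_true, Fin.lt_def]
      have := hmax t
      omega⟩
  simp only [mem_filter, mem_univ, true_and, id] at hs hsmax
  obtain ⟨hst, hds⟩ := hs
  refine ⟨d - Pi.single s 1 - Pi.single t 1, s, t, ?_, hst, fun i => hds ▸ hmax i, ?_,
    antitone_sub_single_sub_single hmono hst (fun j hsj hjt => ?_) hzero⟩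
  · have := hmax t
    funext i
    simp only [Pi.add_apply, Pi.sub_apply, Pi.single_apply]
    split_ifs <;> subst_vars <;> omega
  · rw [Pi.sub_apply, Pi.sub_apply, Pi.single_eq_same, Pi.single_eq_of_ne hst.ne]
    omega
  · have := hmax j
    have : d j ≠ d ⟨0, hn⟩ := fun h => hsj.not_ge (hsmax j ⟨hjt, h⟩)
    omega

theorem IsGraphic.add_single_add_single {d : Fin n → ℕ} (hd : IsGraphic d) {s t : Fin n}
    (hst : s < t) (hs : d s < t) (hmono : Antitone (d + Pi.single s 1 + Pi.single t 1)) :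
    IsGraphic (d + Pi.single s 1 + Pi.single t 1) := by
  obtain ⟨G, rfl⟩ := hd
  refine exists_deg_eq_add_single_add_single G hst.ne fun hadj => ?_
  obtain ⟨u, hu, hus, hsu⟩ := exists_not_adj_of_deg_add_one_lt G (s := s) (Iic t)
    (by rw [Fin.card_Iic]; omega)
  have hut : u ≠ t := by
    rintro rfl
    exact hsu hadj
  refine ⟨u, hus, hsu, ?_⟩
  have := hmono (mem_Iic.mp hu)
  simp only [Pi.add_apply, Pi.single_eq_same, Pi.single_eq_of_ne hus, Pi.single_eq_of_ne hut,
    Pi.single_eq_of_ne hst.ne'] at this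
  omega

theorem isGraphic_of_satisfiesErdosGallai {d : Fin n → ℕ} (hmono : Antitone d)
    (heven : Even (∑ i, d i)) (hEG : SatisfiesErdosGallai d) : IsGraphic d := by
  induction hN : ∑ i, d i using Nat.strong_induction_on generalizing d with
  | _ N ih =>
  rcases eq_or_ne d 0 with rfl | hd
  · exact isGraphic_zero
  obtain ⟨d', s, t, rfl, hst, hmax, hs, hmono'⟩ := exists_eq_add_single_add_single hmono hEG hd
  have hsum : ∑ i, (d' + Pi.single s 1 + Pi.single t 1 : Fin n → ℕ) i = ∑ i, d' i + 2 := by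
    simp [sum_add_distrib]
  have heven' : Even (∑ i, d' i) := by
    rw [hsum] at heven
    simpa [Nat.even_add] using heven
  exact (ih _ (by omega) hmono' heven'
    (hEG.of_add_single_add_single rfl hst hmono hmax heven) rfl).add_single_add_single hst hs hmono

end Sequences

/- `k : Fin n` is the 0-based position of the paper's `k + 1`; for nonincreasing `d`,
`k + 1 ≤ m(d)` iff `k ≤ d k`. -/
/-- Erdős–Gallai theorem (with the Hammer–Ibaraki–Simeone simplification):
a nonincreasing list `d` of nonnegative integers with even sum is graphic iff the
Erdős–Gallai inequality holds for all `k ∈ {1, …, m(d)}`, where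
`m(d) = max {i : dᵢ ≥ i - 1}`.  Here `k : Fin n` is the `0`-indexed version of the
`1`-indexed `k + 1`, and since `d` is nonincreasing, `k + 1 ≤ m(d)` is equivalent to
`d k ≥ k` (`0`-indexed). -/
theorem stmt1 (n : ℕ) (d : Fin n → ℕ) (hmono : Antitone d)
    (heven : Even (∑ i, d i)) :
    (∃ G : SimpleGraph (Fin n), ∀ i, deg G i = d i) ↔
      ∀ k : Fin n, (k : ℕ) ≤ d k →
        ∑ i ∈ Finset.univ.filter (fun i : Fin n => (i : ℕ) ≤ (k : ℕ)), d i ≤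
          ((k : ℕ) + 1) * (k : ℕ) +
            ∑ i ∈ Finset.univ.filter (fun i : Fin n => (k : ℕ) < (i : ℕ)),
              min ((k : ℕ) + 1) (d i) := by
  simp only [← funext_iff]
  exact ⟨fun hG k _ => IsGraphic.satisfiesErdosGallai hG k k.isLt, fun h =>
    isGraphic_of_satisfiesErdosGallai hmono heven (satisfiesErdosGallai_of_forall_le_apply h)⟩
end

section
/- Let π = (π_1,…,π_p) and ρ = (ρ_1,…,ρ_q) be lists of nonnegative integers with π nonincreasing. There exists a simple bipartite graph H with partite sets X = {x_1,…,x_p} and Y = {y_1,…,y_q} (every edge joining X to Y) such that deg_H(x_i) = π_i for all i and deg_H(y_j) = ρ_j for all j, if and only if Σ_{i=1}^p π_i = Σ_{j=1}^q ρ_j and for every k with 1 ≤ k ≤ p one has Σ_{i=1}^k π_i ≤ Σ_{j=1}^q min{k, ρ_j}. -/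
open Finset

section TopValues

variable {α β : Type*} [Fintype β] [DecidableEq β] [LinearOrder α]

theorem exists_card_eq_forall_le_of_mem_of_notMem (f : β → α) {d : ℕ}
    (hd : d ≤ Fintype.card β) :
    ∃ S : Finset β, #S = d ∧ ∀ i ∈ S, ∀ j ∉ S, f j ≤ f i := by
  induction d with
  | zero => exact ⟨∅, rfl, by simp⟩
  | succ d ih =>
    obtain ⟨S, hcard, htop⟩ := ih (by omega)
    have hne : Sᶜ.Nonempty := by
      rw [← card_pos, card_compl, hcard]; omega
    obtain ⟨m, hm, hmax⟩ := exists_max_image Sᶜ f hne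
    rw [mem_compl] at hm
    refine ⟨insert m S, by rw [card_insert_of_notMem hm, hcard], fun i hi j hj => ?_⟩
    rw [mem_insert, not_or] at hj
    rcases mem_insert.mp hi with rfl | hi
    · exact hmax j (mem_compl.mpr hj.2)
    · exact htop i hi j hj.2

theorem forall_mem_le_of_card_le_card_filter {f : β → α} {S : Finset β} {a : α}
    (htop : ∀ i ∈ S, ∀ j ∉ S, f j ≤ f i) (hcard : #S ≤ #{j | a ≤ f j}) :
    ∀ j ∈ S, a ≤ f j := by
  by_contra! ⟨m, hm, hlt⟩
  have hsub : ({j | a ≤ f j} : Finset β) ⊆ S.erase m := by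
    intro j hj
    rw [mem_filter] at hj
    refine mem_erase.mpr ⟨by rintro rfl; exact hlt.not_ge hj.2, ?_⟩
    by_contra hjS
    exact hlt.not_ge (hj.2.trans (htop m hm j hjS))
  have := card_le_card hsub
  rw [card_erase_of_mem hm] at this
  have := card_pos.mpr ⟨m, hm⟩
  omega

end TopValues

theorem sum_min_succ {β : Type*} [Fintype β] (ρ : β → ℕ) (k : ℕ) :
    ∑ j, min (k + 1) (ρ j) = ∑ j, min k (ρ j) + #{j | k < ρ j} := by
  rw [card_filter, ← sum_add_distrib]
  exact sum_congr rfl fun j _ => by split_ifs <;> omega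

section Decrement

variable {β : Type*} [DecidableEq β]

def decrementOn (S : Finset β) (ρ : β → ℕ) (j : β) : ℕ :=
  ρ j - if j ∈ S then 1 else 0

variable {S : Finset β} {ρ : β → ℕ}

theorem decrementOn_add (hpos : ∀ j ∈ S, 0 < ρ j) (j : β) :
    decrementOn S ρ j + (if j ∈ S then 1 else 0) = ρ j := by
  unfold decrementOn
  split_ifs with h
  · have := hpos j h; omega
  · rfl

theorem sum_decrementOn_add_card [Fintype β] (hpos : ∀ j ∈ S, 0 < ρ j) :
    ∑ j, decrementOn S ρ j + #S = ∑ j, ρ j := by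
  simp_rw [← decrementOn_add hpos, sum_add_distrib, sum_boole, filter_mem_eq_inter,
    univ_inter, Nat.cast_id]

theorem sum_min_decrementOn_add_card [Fintype β] (hpos : ∀ j ∈ S, 0 < ρ j) (k : ℕ) :
    ∑ j, min k (decrementOn S ρ j) + #{j ∈ S | ρ j ≤ k} = ∑ j, min k (ρ j) := by
  rw [← sum_add_sum_compl S, ← sum_add_sum_compl S fun j => min k (ρ j), card_filter,
    add_right_comm, ← sum_add_distrib]
  congr 1
  · refine sum_congr rfl fun j hj => ?_
    have := hpos j hj
    simp only [decrementOn, if_pos hj]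
    split_ifs <;> omega
  · refine sum_congr rfl fun j hj => ?_
    simp [decrementOn, (mem_compl.mp hj)]

end Decrement

section GaleRyser

variable {p : ℕ}

theorem Fin.sum_filter_val_lt_succ {M : Type*} [AddCommMonoid M] (π : Fin (p + 1) → M)
    (k : ℕ) :
    ∑ i ∈ univ.filter (fun i : Fin (p + 1) => (i : ℕ) < k + 1), π i =
      π 0 + ∑ i ∈ univ.filter (fun i : Fin p => (i : ℕ) < k), π i.succ := by
  rw [sum_filter, sum_filter, Fin.sum_univ_succ]
  simp only [Fin.val_zero, Nat.zero_lt_succ, if_true, Fin.val_succ, Nat.add_lt_add_iff_right]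

theorem Fin.sum_filter_val_lt_succ_le {π : Fin (p + 1) → ℕ} (hπ : Antitone π) (k : ℕ) :
    ∑ i ∈ univ.filter (fun i : Fin p => (i : ℕ) < k), π i.succ ≤
      ∑ i ∈ univ.filter (fun i : Fin (p + 1) => (i : ℕ) < k), π i := by
  rw [sum_filter, sum_filter, Fin.sum_univ_castSucc]
  refine le_add_right (sum_le_sum fun i _ => ?_)
  simp only [Fin.val_castSucc]
  split_ifs
  · exact hπ (Fin.castSucc_le_succ i)
  · rfl

variable {β : Type*} [Fintype β] [DecidableEq β]

theorem galeRyser_decrementOn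
    {π : Fin (p + 1) → ℕ} {ρ : β → ℕ} {S : Finset β} (hπ : Antitone π) (hS : #S = π 0)
    (htop : ∀ i ∈ S, ∀ j ∉ S, ρ j ≤ ρ i) (hpos : ∀ j ∈ S, 0 < ρ j)
    (hGR : ∀ k, 1 ≤ k → k ≤ p + 1 →
      ∑ i ∈ univ.filter (fun i : Fin (p + 1) => (i : ℕ) < k), π i ≤ ∑ j, min k (ρ j))
    (k : ℕ) (hk : 1 ≤ k) (hkp : k ≤ p) :
    ∑ i ∈ univ.filter (fun i : Fin p => (i : ℕ) < k), π i.succ ≤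
      ∑ j, min k (decrementOn S ρ j) := by
  have hdecr := sum_min_decrementOn_add_card hpos k
  rcases (#{j ∈ S | ρ j ≤ k}).eq_zero_or_pos with ht | ht
  · -- every column of `S` has degree above `k`, so `min k` does not see the decrement
    have := hGR k hk (by omega)
    have := Fin.sum_filter_val_lt_succ_le hπ k
    omega
  · -- some column of `S` has degree at most `k`, hence so do all columns outside `S`
    obtain ⟨m, hm⟩ := card_pos.mp ht
    rw [mem_filter] at hm
    have hbig : ({j | k < ρ j} : Finset β) = {j ∈ S | ¬ ρ j ≤ k} := by
      ext j
      simp only [mem_filter, mem_univ, true_and, not_le]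
      refine ⟨fun hj => ⟨?_, hj⟩, And.right⟩
      by_contra hjS
      exact (htop m hm.1 j hjS).trans hm.2 |>.not_gt hj
    have hsplit := card_filter_add_card_filter_not (s := S) (fun j => ρ j ≤ k)
    have := hGR (k + 1) (by omega) (by omega)
    rw [Fin.sum_filter_val_lt_succ, sum_min_succ, hbig] at this
    omega

theorem exists_rowSets_of_galeRyser :
    ∀ {p : ℕ} (π : Fin p → ℕ) (ρ : β → ℕ), Antitone π → ∑ i, π i = ∑ j, ρ j →
    (∀ k, 1 ≤ k → k ≤ p →
      ∑ i ∈ univ.filter (fun i : Fin p => (i : ℕ) < k), π i ≤ ∑ j, min k (ρ j)) →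
    ∃ A : Fin p → Finset β, (∀ i, #(A i) = π i) ∧ ∀ j, #{i | j ∈ A i} = ρ j
  | 0, π, ρ, _, hsum, _ => by
    refine ⟨fun i => i.elim0, fun i => i.elim0, fun j => ?_⟩
    rw [Fin.sum_univ_zero, eq_comm, sum_eq_zero_iff] at hsum
    simp [hsum j (mem_univ j)]
  | p + 1, π, ρ, hπ, hsum, hGR => by
    have hfirst : π 0 ≤ #{j | 0 < ρ j} := by
      have h1 := hGR (0 + 1) le_rfl (by omega)
      rw [Fin.sum_filter_val_lt_succ, sum_min_succ] at h1
      simpa using h1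
    obtain ⟨S, hS, htop⟩ := exists_card_eq_forall_le_of_mem_of_notMem ρ
      (hfirst.trans (card_filter_le _ _))
    have hpos : ∀ j ∈ S, 0 < ρ j :=
      forall_mem_le_of_card_le_card_filter htop (hS ▸ hfirst)
    have hsum' : ∑ i : Fin p, π i.succ = ∑ j, decrementOn S ρ j := by
      have := sum_decrementOn_add_card hpos
      rw [Fin.sum_univ_succ] at hsum
      omega
    obtain ⟨A, hrow, hcol⟩ := exists_rowSets_of_galeRyser (fun i => π i.succ)
      (decrementOn S ρ) (hπ.comp_monotone (Fin.strictMono_succ.monotone)) hsum'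
      (galeRyser_decrementOn hπ hS htop hpos hGR)
    refine ⟨Fin.cons S A, Fin.cases hS hrow, fun j => ?_⟩
    rw [Fin.card_filter_univ_succ', ← decrementOn_add hpos j]
    simp only [Fin.cons_zero, Fin.cons_succ, hcol]
    omega

end GaleRyser

section BipartiteGraph

variable {α β : Type*}

def relGraph (r : α → β → Prop) : SimpleGraph (α ⊕ β) where
  Adj
    | .inl a, .inr b => r a b
    | .inr b, .inl a => r a b
    | _, _ => False
  symm := ⟨by rintro (a | b) (a' | b') h <;> exact h⟩
  loopless := ⟨by rintro (a | b) h <;> exact h⟩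

theorem deg_inl_eq_card_bipartiteAbove [Fintype β] (H : SimpleGraph (α ⊕ β))
    [DecidableRel H.Adj] (hα : ∀ a a', ¬ H.Adj (.inl a) (.inl a')) (a : α) :
    deg H (.inl a) = #(univ.bipartiteAbove (fun a b => H.Adj (.inl a) (.inr b)) a) := by
  have : H.neighborSet (.inl a) =
      Sum.inr '' ↑(univ.bipartiteAbove (fun a b => H.Adj (.inl a) (.inr b)) a) := by
    ext (a' | b) <;> simp [bipartiteAbove, hα]
  rw [deg, this, Set.ncard_image_of_injective _ Sum.inr_injective, Set.ncard_coe_finset]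

theorem deg_inr_eq_card_bipartiteBelow [Fintype α] (H : SimpleGraph (α ⊕ β))
    [DecidableRel H.Adj] (hβ : ∀ b b', ¬ H.Adj (.inr b) (.inr b')) (b : β) :
    deg H (.inr b) = #(univ.bipartiteBelow (fun a b => H.Adj (.inl a) (.inr b)) b) := by
  have : H.neighborSet (.inr b) =
      Sum.inl '' ↑(univ.bipartiteBelow (fun a b => H.Adj (.inl a) (.inr b)) b) := by
    ext (a | b') <;> simp [bipartiteBelow, hβ, H.adj_comm]
  rw [deg, this, Set.ncard_image_of_injective _ Sum.inl_injective, Set.ncard_coe_finset]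

theorem deg_relGraph_inl [Fintype β] (r : α → β → Prop) [∀ a, DecidablePred (r a)] (a : α) :
    deg (relGraph r) (.inl a) = #(univ.bipartiteAbove r a) := by
  classical
  convert deg_inl_eq_card_bipartiteAbove (relGraph r) (fun _ _ h => h) a
  exact Iff.rfl

theorem deg_relGraph_inr [Fintype α] (r : α → β → Prop) [∀ a b, Decidable (r a b)] (b : β) :
    deg (relGraph r) (.inr b) = #(univ.bipartiteBelow r b) := by
  classical
  convert deg_inr_eq_card_bipartiteBelow (relGraph r) (fun _ _ h => h) b
  exact Iff.rfl

theorem sum_card_bipartiteAbove_le_sum_min [Fintype α] [Fintype β] (r : α → β → Prop)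
    [∀ a b, Decidable (r a b)] {s : Finset α} {k : ℕ} (hs : #s ≤ k) :
    ∑ a ∈ s, #(univ.bipartiteAbove r a) ≤ ∑ b, min k #(univ.bipartiteBelow r b) := by
  rw [sum_card_bipartiteAbove_eq_sum_card_bipartiteBelow]
  exact sum_le_sum fun b _ => le_min ((card_filter_le _ _).trans hs)
    (card_le_card (filter_subset_filter _ (subset_univ s)))

end BipartiteGraph

/-- Gale–Ryser theorem: `π` (nonincreasing) and `ρ` are the degree lists of the two
partite sets of a bipartitioned simple graph iff they have equal sums and the
Gale–Ryser inequalities hold for every `k` with `1 ≤ k ≤ p`. -/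
theorem stmt3 (p q : ℕ) (π : Fin p → ℕ) (ρ : Fin q → ℕ) (hmono : Antitone π) :
    (∃ H : SimpleGraph (Fin p ⊕ Fin q),
        (∀ i j, ¬ H.Adj (Sum.inl i) (Sum.inl j)) ∧
        (∀ i j, ¬ H.Adj (Sum.inr i) (Sum.inr j)) ∧
        (∀ i, deg H (Sum.inl i) = π i) ∧
        (∀ j, deg H (Sum.inr j) = ρ j)) ↔
      ((∑ i, π i = ∑ j, ρ j) ∧
        ∀ k : ℕ, 1 ≤ k → k ≤ p →
          ∑ i ∈ Finset.univ.filter (fun i : Fin p => (i : ℕ) < k), π i ≤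
            ∑ j, min k (ρ j)) := by
  classical
  constructor
  · rintro ⟨H, hX, hY, hπ, hρ⟩
    set r := fun i j => H.Adj (Sum.inl i) (Sum.inr j)
    have hπ' : π = fun i => #(univ.bipartiteAbove r i) :=
      funext fun i => (hπ i).symm.trans (deg_inl_eq_card_bipartiteAbove H hX i)
    have hρ' : ρ = fun j => #(univ.bipartiteBelow r j) :=
      funext fun j => (hρ j).symm.trans (deg_inr_eq_card_bipartiteBelow H hY j)
    subst hπ' hρ'
    exact ⟨sum_card_bipartiteAbove_eq_sum_card_bipartiteBelow r, fun k _ _ =>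
      sum_card_bipartiteAbove_le_sum_min r (Fin.card_filter_val_lt.trans_le (min_le_right _ _))⟩
  · rintro ⟨hsum, hGR⟩
    obtain ⟨A, hrow, hcol⟩ := exists_rowSets_of_galeRyser π ρ hmono hsum hGR
    refine ⟨relGraph fun i j => j ∈ A i, fun _ _ h => h, fun _ _ h => h, fun i => ?_, fun j => ?_⟩
    · rw [deg_relGraph_inl, ← hrow, bipartiteAbove, filter_mem_eq_inter, univ_inter]
    · rw [deg_relGraph_inr, ← hcol]
      rfl
end

section
/- Let G be a finite simple graph and let a, b, c, d be pairwise distinct vertices of G such that ac and bd are edges of G, ad and bc are not edges of G, deg_G(a) = deg_G(b), and deg_G(c) = deg_G(d). Let H be the graph obtained from G by deleting the edges ac and bd and adding the edges ad and bc. Then for every vertex v, the multiset of degrees in H of the neighbors of v in H equals the multiset of degrees in G of the neighbors of v in G (i.e., an N-switch leaves the neighborhood degree list of every vertex unchanged). -/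
/-- The graph resulting from deleting the edges `ac` and `bd` of `G` and adding
the edges `ad` and `bc`. -/
def switchedGraph {V : Type*} (G : SimpleGraph V) (a b c d : V) : SimpleGraph V :=
  (G.deleteEdges {s(a, c), s(b, d)}) ⊔ SimpleGraph.fromEdgeSet {s(a, d), s(b, c)}

lemma switched_adj {V : Type*} (G : SimpleGraph V) (a b c d x y : V) :
    (switchedGraph G a b c d).Adj x y ↔
      (G.Adj x y ∧ ¬(s(x,y) = s(a,c) ∨ s(x,y) = s(b,d))) ∨
      ((s(x,y) = s(a,d) ∨ s(x,y) = s(b,c)) ∧ x ≠ y) := by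
  rw [switchedGraph, SimpleGraph.sup_adj, SimpleGraph.deleteEdges_adj,
    SimpleGraph.fromEdgeSet_adj]
  simp only [Set.mem_insert_iff, Set.mem_singleton_iff]

lemma switched_comm {V : Type*} (G : SimpleGraph V) (a b c d : V) :
    switchedGraph G a b c d = switchedGraph G b a d c := by
  simp [switchedGraph, Set.pair_comm]

lemma switched_swap {V : Type*} (G : SimpleGraph V) (a b c d : V) :
    switchedGraph G a b c d = switchedGraph G c d a b := by
  simp only [switchedGraph]
  rw [Sym2.eq_swap (a := a) (b := c), Sym2.eq_swap (a := b) (b := d),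
    Sym2.eq_swap (a := a) (b := d), Sym2.eq_swap (a := b) (b := c), Set.pair_comm (s(d,a))]

lemma ns_a {V : Type*} (G : SimpleGraph V) (a b c d : V)
    (hab : a ≠ b) (hac : a ≠ c) (had : a ≠ d) :
    (switchedGraph G a b c d).neighborSet a = insert d (G.neighborSet a \ {c}) := by
  ext x
  simp only [SimpleGraph.mem_neighborSet, switched_adj, Sym2.eq_iff, Set.mem_insert_iff,
    Set.mem_diff, Set.mem_singleton_iff]
  constructor
  · aesop
  · rintro (rfl | ⟨h, hxc⟩)
    · exact Or.inr ⟨by tauto, had⟩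
    · refine Or.inl ⟨h, ?_⟩
      rintro ((⟨-, rfl⟩ | ⟨rfl, rfl⟩) | (⟨rfl, rfl⟩ | ⟨rfl, rfl⟩))
      · exact hxc rfl
      · exact hac rfl
      · exact hab rfl
      · exact had rfl

lemma ns_other {V : Type*} (G : SimpleGraph V) (a b c d v : V)
    (hva : v ≠ a) (hvb : v ≠ b) (hvc : v ≠ c) (hvd : v ≠ d) :
    (switchedGraph G a b c d).neighborSet v = G.neighborSet v := by
  ext x
  simp only [SimpleGraph.mem_neighborSet, switched_adj, Sym2.eq_iff]
  constructor
  · aesop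
  · intro h
    refine Or.inl ⟨h, ?_⟩
    rintro ((⟨rfl, rfl⟩ | ⟨rfl, rfl⟩) | (⟨rfl, rfl⟩ | ⟨rfl, rfl⟩))
    · exact hva rfl
    · exact hvc rfl
    · exact hvb rfl
    · exact hvd rfl

lemma deg_at_a {V : Type*} [Fintype V] (G : SimpleGraph V) (a b c d : V)
    (hab : a ≠ b) (hac : a ≠ c) (had : a ≠ d)
    (hadj : G.Adj a c) (hnadj : ¬ G.Adj a d) :
    deg (switchedGraph G a b c d) a = deg G a := by
  rw [deg, deg, ns_a G a b c d hab hac had]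
  have hd : d ∉ G.neighborSet a \ {c} := fun h => hnadj h.1
  rw [Set.ncard_insert_of_notMem hd (Set.toFinite _)]
  exact Set.ncard_diff_singleton_add_one hadj (Set.toFinite _)

lemma map_swap {α : Type*} [DecidableEq α] (f : α → ℕ) (S : Finset α) (c d : α)
    (hc : c ∈ S) (hd : d ∉ S) (h : f c = f d) :
    (insert d (S.erase c)).val.map f = S.val.map f := by
  rw [Finset.insert_val_of_notMem (fun h' => hd (Finset.mem_of_mem_erase h')),
    Finset.erase_val, Multiset.map_cons]
  conv_rhs => rw [show S.val = c ::ₘ S.val.erase c from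
    (Multiset.cons_erase (Finset.mem_def.mp hc)).symm]
  rw [Multiset.map_cons, h]

lemma ndl_at_a {V : Type*} [Fintype V] (G : SimpleGraph V) (a b c d : V)
    (hab : a ≠ b) (hac : a ≠ c) (had : a ≠ d)
    (hadj : G.Adj a c) (hnadj : ¬ G.Adj a d) (h : deg G c = deg G d) :
    (((switchedGraph G a b c d).neighborSet a).toFinite.toFinset).val.map (deg G)
      = ((G.neighborSet a).toFinite.toFinset).val.map (deg G) := by
  classical
  have hfin : ((switchedGraph G a b c d).neighborSet a).toFinite.toFinset
      = insert d (((G.neighborSet a).toFinite.toFinset).erase c) := by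
    ext x
    simp only [Set.Finite.mem_toFinset, ns_a G a b c d hab hac had, Set.mem_insert_iff,
      Set.mem_diff, Set.mem_singleton_iff, Finset.mem_insert, Finset.mem_erase]
    tauto
  rw [hfin]
  exact map_swap _ _ _ _ (by simpa using hadj) (by simpa using hnadj) h

/-- An N-switch (a 2-switch on `a, b, c, d` with `deg a = deg b` and `deg c = deg d`)
leaves the neighborhood degree list of every vertex unchanged. -/
theorem stmt5 {V : Type*} [Fintype V] (G : SimpleGraph V) (a b c d : V)
    (hab : a ≠ b) (hac : a ≠ c) (had : a ≠ d) (hbc : b ≠ c) (hbd : b ≠ d) (hcd : c ≠ d)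
    (hadj₁ : G.Adj a c) (hadj₂ : G.Adj b d)
    (hnadj₁ : ¬ G.Adj a d) (hnadj₂ : ¬ G.Adj b c)
    (hdeg₁ : deg G a = deg G b) (hdeg₂ : deg G c = deg G d) :
    ∀ v, NDL (switchedGraph G a b c d) v = NDL G v := by
  have hdegall : deg (switchedGraph G a b c d) = deg G := by
    funext v
    by_cases hva : v = a
    · rw [hva]; exact deg_at_a G a b c d hab hac had hadj₁ hnadj₁
    by_cases hvb : v = b
    · rw [hvb]; rw [switched_comm]
      exact deg_at_a G b a d c hab.symm hbd hbc hadj₂ hnadj₂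
    by_cases hvc : v = c
    · rw [hvc]; rw [switched_swap]
      exact deg_at_a G c d a b hcd hac.symm hbc.symm hadj₁.symm (fun h => hnadj₂ h.symm)
    by_cases hvd : v = d
    · rw [hvd]; rw [switched_comm, switched_swap]
      exact deg_at_a G d c b a hcd.symm hbd.symm had.symm hadj₂.symm (fun h => hnadj₁ h.symm)
    · rw [deg, ns_other G a b c d v hva hvb hvc hvd]; rfl
  intro v
  rw [NDL, NDL, hdegall]
  by_cases hva : v = a
  · rw [hva]; exact ndl_at_a G a b c d hab hac had hadj₁ hnadj₁ hdeg₂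
  by_cases hvb : v = b
  · rw [hvb]; rw [switched_comm]
    exact ndl_at_a G b a d c hab.symm hbd hbc hadj₂ hnadj₂ hdeg₂.symm
  by_cases hvc : v = c
  · rw [hvc]; rw [switched_swap]
    exact ndl_at_a G c d a b hcd hac.symm hbc.symm hadj₁.symm (fun h => hnadj₂ h.symm) hdeg₁
  by_cases hvd : v = d
  · rw [hvd]; rw [switched_comm, switched_swap]
    exact ndl_at_a G d c b a hcd.symm hbd.symm had.symm hadj₂.symm
      (fun h => hnadj₁ h.symm) hdeg₁.symm
  · have hfin : ((switchedGraph G a b c d).neighborSet v).toFinite.toFinset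
        = (G.neighborSet v).toFinite.toFinset := by
      ext x
      simp [ns_other G a b c d v hva hvb hvc hvd]
    rw [hfin]
end

section
/- Let G be a finite simple graph, let v be a vertex of G, and let T be a set of vertices of G with v ∉ T. Let p be the number of neighbors of v lying in T, and let S ⊆ T be any set of size p such that every vertex of S has degree in G at least as large as every vertex of T \ S (i.e., S is a set of p vertices of T of highest degree in G). Then there exists a simple graph G' on the same vertex set such that every vertex has the same degree in G' as in G, the set of neighbors of v in G' lying in T is exactly S, and the neighbors of v in G' outside T are exactly the neighbors of v in G outside T. -/
namespace SimpleGraph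

variable {V : Type*} (G : SimpleGraph V) (a b c d : V)

def twoSwitch : SimpleGraph V :=
  G.deleteEdges {s(a, b), s(c, d)} ⊔ edge a c ⊔ edge b d

structure IsTwoSwitch : Prop where
  adj_ab : G.Adj a b
  adj_cd : G.Adj c d
  not_adj_ac : ¬ G.Adj a c
  not_adj_bd : ¬ G.Adj b d
  ne_ac : a ≠ c
  ne_bd : b ≠ d

variable {G a b c d}

theorem twoSwitch_comm_left : G.twoSwitch b a d c = G.twoSwitch a b c d := by
  ext x y
  simp only [twoSwitch, sup_adj, deleteEdges_adj, edge_adj]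
  grind

theorem twoSwitch_comm_right : G.twoSwitch c d a b = G.twoSwitch a b c d := by
  rw [twoSwitch, twoSwitch, Set.pair_comm, edge_comm c a, edge_comm d b]

theorem IsTwoSwitch.symm_left (h : G.IsTwoSwitch a b c d) : G.IsTwoSwitch b a d c :=
  ⟨h.adj_ab.symm, h.adj_cd.symm, h.not_adj_bd, h.not_adj_ac, h.ne_bd, h.ne_ac⟩

theorem IsTwoSwitch.symm_right (h : G.IsTwoSwitch a b c d) : G.IsTwoSwitch c d a b :=
  ⟨h.adj_cd, h.adj_ab, fun h' => h.not_adj_ac h'.symm, fun h' => h.not_adj_bd h'.symm,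
    h.ne_ac.symm, h.ne_bd.symm⟩

theorem neighborSet_twoSwitch_of_ne {u : V} (ha : u ≠ a) (hb : u ≠ b) (hc : u ≠ c)
    (hd : u ≠ d) : (G.twoSwitch a b c d).neighborSet u = G.neighborSet u := by
  ext y
  simp only [mem_neighborSet, twoSwitch, sup_adj, deleteEdges_adj, edge_adj, Set.mem_insert_iff,
    Set.mem_singleton_iff, Sym2.eq_iff]
  grind

theorem IsTwoSwitch.neighborSet_twoSwitch (h : G.IsTwoSwitch a b c d) :
    (G.twoSwitch a b c d).neighborSet a = insert c (G.neighborSet a \ {b}) := by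
  have hab : a ≠ b := h.adj_ab.ne
  have hac : a ≠ c := h.ne_ac
  have had : a ≠ d := by rintro rfl; exact h.not_adj_ac h.adj_cd.symm
  have hbc : b ≠ c := by rintro rfl; exact h.not_adj_ac h.adj_ab
  ext y
  simp only [mem_neighborSet, twoSwitch, sup_adj, deleteEdges_adj, edge_adj, Set.mem_insert_iff,
    Set.mem_sdiff, Set.mem_singleton_iff, Sym2.eq_iff]
  grind

theorem IsTwoSwitch.deg_twoSwitch (h : G.IsTwoSwitch a b c d) (u : V) :
    deg (G.twoSwitch a b c d) u = deg G u := by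
  have deg_first : ∀ {a b c d : V}, G.IsTwoSwitch a b c d →
      deg (G.twoSwitch a b c d) a = deg G a := fun h => by
    rw [deg, h.neighborSet_twoSwitch]
    exact Set.ncard_exchange h.not_adj_ac h.adj_ab
  by_cases ha : u = a
  · subst ha; exact deg_first h
  by_cases hb : u = b
  · subst hb; rw [← twoSwitch_comm_left]; exact deg_first h.symm_left
  by_cases hc : u = c
  · subst hc; rw [← twoSwitch_comm_right]; exact deg_first h.symm_right
  by_cases hd : u = d
  · subst hd
    rw [← twoSwitch_comm_right, ← twoSwitch_comm_left]
    exact deg_first h.symm_right.symm_left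
  rw [deg, deg, neighborSet_twoSwitch_of_ne ha hb hc hd]

theorem exists_adj_not_adj_of_deg_le [Finite V] {v s t : V} (hvt : G.Adj v t)
    (hvs : ¬ G.Adj v s) (hsv : s ≠ v) (hdeg : deg G t ≤ deg G s) :
    ∃ w, t ≠ w ∧ G.Adj s w ∧ ¬ G.Adj t w := by
  by_contra! hcon
  have hsub : G.neighborSet s \ {t} ⊂ G.neighborSet t \ {s} := by
    refine (Set.ssubset_iff_of_subset ?_).2
      ⟨v, ⟨hvt.symm, hsv.symm⟩, fun hv => hvs hv.1.symm⟩
    rintro w ⟨hsw, hwt⟩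
    exact ⟨hcon w (Ne.symm hwt) hsw, (G.ne_of_adj hsw).symm⟩
  have hlt := Set.ncard_lt_ncard hsub
  unfold deg at hdeg
  by_cases hst : G.Adj s t
  · rw [Set.ncard_sdiff_singleton_of_mem (s := G.neighborSet s) hst,
      Set.ncard_sdiff_singleton_of_mem (s := G.neighborSet t) hst.symm] at hlt
    omega
  · rw [Set.sdiff_singleton_eq_self (s := G.neighborSet s) hst,
      Set.sdiff_singleton_eq_self (s := G.neighborSet t) fun h => hst h.symm] at hlt
    omega

theorem exists_deg_eq_neighborSet_exchange [Finite V] {v s t : V} (hvt : G.Adj v t)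
    (hvs : ¬ G.Adj v s) (hsv : s ≠ v) (hdeg : deg G t ≤ deg G s) :
    ∃ G' : SimpleGraph V, (∀ u, deg G' u = deg G u) ∧
      G'.neighborSet v = insert s (G.neighborSet v \ {t}) := by
  obtain ⟨w, htw, hsw, htw'⟩ := G.exists_adj_not_adj_of_deg_le hvt hvs hsv hdeg
  have h : G.IsTwoSwitch v t s w := ⟨hvt, hsw, hvs, htw', hsv.symm, htw⟩
  exact ⟨_, h.deg_twoSwitch, h.neighborSet_twoSwitch⟩

theorem exists_deg_eq_neighborSet_eq [Finite V] {v : V} {S T : Set V} (hvT : v ∉ T)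
    (hST : S ⊆ T) (hScard : S.ncard = (T ∩ G.neighborSet v).ncard)
    (hStop : ∀ s ∈ S, ∀ t ∈ T \ S, deg G t ≤ deg G s) :
    ∃ G' : SimpleGraph V, (∀ u, deg G' u = deg G u) ∧
      G'.neighborSet v = S ∪ (G.neighborSet v \ T) := by
  induction hn : (S \ G.neighborSet v).ncard generalizing G with
  | zero =>
    have hSN : S ⊆ G.neighborSet v :=
      Set.sdiff_eq_empty.1 ((Set.ncard_eq_zero (Set.toFinite _)).1 hn)
    have hS : S = T ∩ G.neighborSet v :=
      Set.eq_of_subset_of_ncard_le (fun x hx => ⟨hST hx, hSN hx⟩) hScard.ge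
    refine ⟨G, fun _ => rfl, ?_⟩
    rw [hS, Set.inter_comm, Set.inter_union_sdiff]
  | succ n ih =>
    obtain ⟨s, hsS, hvs⟩ : (S \ G.neighborSet v).Nonempty :=
      Set.nonempty_of_ncard_ne_zero (by omega)
    obtain ⟨t, ⟨htT, hvt⟩, htS⟩ : ((T ∩ G.neighborSet v) \ S).Nonempty := by
      rw [Set.sdiff_nonempty]
      intro h
      exact hvs (Set.eq_of_subset_of_ncard_le h hScard.le ▸ hsS).2
    obtain ⟨G₂, hdeg, hN⟩ := G.exists_deg_eq_neighborSet_exchange hvt hvs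
      (fun h => hvT (h ▸ hST hsS)) (hStop s hsS t ⟨htT, htS⟩)
    have hTN : T ∩ G₂.neighborSet v = insert s ((T ∩ G.neighborSet v) \ {t}) := by
      rw [hN]; ext x
      simp only [Set.mem_inter_iff, Set.mem_insert_iff, Set.mem_sdiff, Set.mem_singleton_iff]
      grind
    have hSN : S \ G₂.neighborSet v = (S \ G.neighborSet v) \ {s} := by
      rw [hN]; ext x
      simp only [Set.mem_insert_iff, Set.mem_sdiff, Set.mem_singleton_iff]
      grind
    have hNT : G₂.neighborSet v \ T = G.neighborSet v \ T := by
      rw [hN]; ext x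
      simp only [Set.mem_insert_iff, Set.mem_sdiff, Set.mem_singleton_iff]
      grind
    obtain ⟨G', hdeg', hN'⟩ := ih (G := G₂)
      (by rw [hTN, Set.ncard_exchange (s := T ∩ G.neighborSet v) (fun h => hvs h.2)
        ⟨htT, hvt⟩, hScard])
      (fun s hs t ht => by rw [hdeg, hdeg]; exact hStop s hs t ht)
      (by rw [hSN, Set.ncard_sdiff_singleton_of_mem (s := S \ G.neighborSet v) ⟨hsS, hvs⟩, hn]
          rfl)
    exact ⟨G', fun u => (hdeg' u).trans (hdeg u), hNT ▸ hN'⟩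

end SimpleGraph

/-- Kleitman–Wang style lemma: if `v ∉ T` has `p` neighbors in `T` and `S` is a set of
`p` vertices of `T` of highest degree in `G`, then there is a realization `G'` of the
degree sequence of `G` in which the neighborhood of `v` restricted to `T` is exactly
`S` and the neighbors of `v` outside `T` are unchanged. -/
theorem stmt6 {V : Type*} [Fintype V] (G : SimpleGraph V) (v : V) (T : Set V)
    (hvT : v ∉ T) (S : Set V) (hST : S ⊆ T)
    (hScard : S.ncard = (T ∩ G.neighborSet v).ncard)
    (hStop : ∀ s ∈ S, ∀ t ∈ T \ S, deg G t ≤ deg G s) :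
    ∃ G' : SimpleGraph V,
      (∀ u, deg G' u = deg G u) ∧
      (∀ t ∈ T, (G'.Adj v t ↔ t ∈ S)) ∧
      (∀ u, u ∉ T → (G'.Adj v u ↔ G.Adj v u)) := by
  obtain ⟨G', hdeg, hN⟩ := G.exists_deg_eq_neighborSet_eq hvT hST hScard hStop
  refine ⟨G', hdeg, fun t ht => ?_, fun u hu => ?_⟩
  · rw [← G'.mem_neighborSet, hN]
    simp [ht]
  · rw [← G'.mem_neighborSet, hN]
    simp [hu, show u ∉ S from fun h => hu (hST h)]
end

section
/- Let H and H' be simple bipartite graphs on the same finite vertex set, both having the same pair of partite sets X and Y (so that every edge of H and every edge of H' joins a vertex of X to a vertex of Y), and suppose every vertex has the same degree in H as in H'. Then H can be transformed into H' by a finite sequence of 2-switches each of which involves exactly two vertices of X and two vertices of Y; that is, each step deletes two edges x_1y_1 and x_2y_2 (with x_1, x_2 ∈ X distinct and y_1, y_2 ∈ Y distinct, and x_1y_2, x_2y_1 non-edges) and adds the edges x_1y_2 and x_2y_1. In particular, every intermediate graph is bipartite with partite sets X and Y. -/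
/-- `H` is obtained from `G` by a 2-switch involving exactly two vertices `x₁, x₂` of
`X` and two vertices `y₁, y₂` of `Y`: the edges `x₁y₁` and `x₂y₂` are deleted and the
edges `x₁y₂` and `x₂y₁` are added. -/
def BipSwitch {V : Type*} (X Y : Set V) (G H : SimpleGraph V) : Prop :=
  ∃ x₁ x₂ y₁ y₂ : V, x₁ ∈ X ∧ x₂ ∈ X ∧ y₁ ∈ Y ∧ y₂ ∈ Y ∧
    x₁ ≠ x₂ ∧ y₁ ≠ y₂ ∧ x₁ ≠ y₁ ∧ x₁ ≠ y₂ ∧ x₂ ≠ y₁ ∧ x₂ ≠ y₂ ∧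
    G.Adj x₁ y₁ ∧ G.Adj x₂ y₂ ∧ ¬ G.Adj x₁ y₂ ∧ ¬ G.Adj x₂ y₁ ∧
    H = switchedGraph G x₁ x₂ y₁ y₂

open SimpleGraph
open scoped symmDiff

namespace Set

variable {α : Type*} [Finite α] {s t : Set α} {p q : α}

theorem ncard_symmDiff_lt (h : t.ncard < 2 * (s ∩ t).ncard) : (s ∆ t).ncard < s.ncard := by
  have hs := ncard_inter_add_ncard_sdiff_eq_ncard s t
  have ht := ncard_inter_add_ncard_sdiff_eq_ncard t s
  have hu := ncard_union_le (s \ t) (t \ s)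
  rw [inter_comm] at ht
  rw [Set.symmDiff_def]
  omega

theorem ncard_symmDiff_pair (hp : p ∈ s) (hq : q ∉ s) : (s ∆ {p, q}).ncard = s.ncard := by
  have : s ∆ {p, q} = insert q (s \ {p}) := by
    ext x
    simp only [mem_symmDiff, mem_insert_iff, mem_singleton_iff, mem_sdiff]
    grind
  rw [this, ncard_insert_of_notMem (fun h => hq h.1), ncard_sdiff_singleton_add_one hp]

end Set

namespace SimpleGraph

variable {V : Type*} {G H H' D : SimpleGraph V} {X Y : Set V} {a b c d v w : V}

theorem neighborSet_symmDiff (G H : SimpleGraph V) (v : V) :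
    (G ∆ H).neighborSet v = G.neighborSet v ∆ H.neighborSet v := by
  simp [symmDiff_def]

theorem edgeSet_symmDiff (G H : SimpleGraph V) : (G ∆ H).edgeSet = G.edgeSet ∆ H.edgeSet := by
  simp [symmDiff_def]

theorem IsBipartiteWith.mono (h : G.IsBipartiteWith X Y) (hle : H ≤ G) :
    H.IsBipartiteWith X Y :=
  ⟨h.disjoint, fun _ _ hadj => h.mem_of_adj (hle hadj)⟩

theorem IsBipartiteWith.symmDiff (hG : G.IsBipartiteWith X Y) (hH : H.IsBipartiteWith X Y) :
    (G ∆ H).IsBipartiteWith X Y :=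
  ⟨hG.disjoint, fun _ _ hadj => hadj.elim (hG.mem_of_adj ·.1) (hH.mem_of_adj ·.1)⟩

-- the 4-cycle `a c b d`, whose edges and non-edges a 2-switch exchanges
def switchCycle (a b c d : V) : SimpleGraph V :=
  fromEdgeSet {s(a, c), s(b, d), s(a, d), s(b, c)}

theorem switchCycle_comm_left : switchCycle b a c d = switchCycle a b c d := by
  ext u w; simp [switchCycle]; tauto

theorem switchCycle_comm_right : switchCycle a b d c = switchCycle a b c d := by
  ext u w; simp [switchCycle]; tauto

theorem switchCycle_isBipartiteWith (hXY : Disjoint X Y) (ha : a ∈ X) (hb : b ∈ X) (hc : c ∈ Y)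
    (hd : d ∈ Y) : (switchCycle a b c d).IsBipartiteWith X Y := by
  refine ⟨hXY, fun u w huw => ?_⟩
  simp only [switchCycle, fromEdgeSet_adj, Set.mem_insert_iff, Set.mem_singleton_iff,
    Sym2.eq_iff] at huw
  grind

structure IsSwitchable (G : SimpleGraph V) (a b c d : V) : Prop where
  adj_ac : G.Adj a c
  adj_bd : G.Adj b d
  not_adj_ad : ¬G.Adj a d
  not_adj_bc : ¬G.Adj b c
  ne_ad : a ≠ d
  ne_bc : b ≠ c

namespace IsSwitchable

theorem ne_ab (h : G.IsSwitchable a b c d) : a ≠ b := fun hab => h.not_adj_ad (hab ▸ h.adj_bd)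

theorem ne_cd (h : G.IsSwitchable a b c d) : c ≠ d := fun hcd => h.not_adj_ad (hcd ▸ h.adj_ac)

theorem switchedGraph_eq (h : G.IsSwitchable a b c d) :
    switchedGraph G a b c d = G ∆ switchCycle a b c d := by
  obtain ⟨hac, hbd, had, hbc, -, -⟩ := h
  ext u w
  simp only [switchedGraph, switchCycle, symmDiff_def, sup_adj, sdiff_adj, deleteEdges_adj,
    fromEdgeSet_adj, Set.mem_insert_iff, Set.mem_singleton_iff, Sym2.eq_iff]
  grind [G.adj_symm, G.ne_of_adj]

theorem symmDiff_switchCycle (h : G.IsSwitchable a b c d) :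
    (G ∆ switchCycle a b c d).IsSwitchable a b d c := by
  have := h.ne_ab; have := h.ne_cd; have := h.ne_ad; have := h.ne_bc
  have := h.adj_ac; have := h.adj_bd; have := h.not_adj_ad; have := h.not_adj_bc
  refine ⟨?_, ?_, ?_, ?_, h.adj_ac.ne, h.adj_bd.ne⟩ <;>
  simp [switchCycle, symmDiff_def] <;> grind [G.ne_of_adj]

theorem neighborSet_switchCycle (h : G.IsSwitchable a b c d) (v : V) :
    (∃ p q, G.Adj v p ∧ ¬G.Adj v q ∧ (switchCycle a b c d).neighborSet v = {p, q}) ∨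
      (switchCycle a b c d).neighborSet v = ∅ := by
  have := h.ne_ab; have := h.ne_cd; have := h.adj_ac.ne; have := h.adj_bd.ne
  have := h.ne_ad; have := h.ne_bc
  have hN : ∀ w, w ∈ (switchCycle a b c d).neighborSet v ↔
      v ≠ w ∧ (v = a ∨ v = b) ∧ (w = c ∨ w = d) ∨ v ≠ w ∧ (v = c ∨ v = d) ∧ (w = a ∨ w = b) := by
    intro w
    simp only [switchCycle, mem_neighborSet, fromEdgeSet_adj, Set.mem_insert_iff,
      Set.mem_singleton_iff, Sym2.eq_iff]
    grind
  by_cases hva : v = a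
  · subst hva
    exact Or.inl ⟨c, d, h.adj_ac, h.not_adj_ad, Set.ext fun w => by grind⟩
  by_cases hvb : v = b
  · subst hvb
    exact Or.inl ⟨d, c, h.adj_bd, h.not_adj_bc, Set.ext fun w => by grind⟩
  by_cases hvc : v = c
  · subst hvc
    exact Or.inl ⟨a, b, h.adj_ac.symm, fun h' => h.not_adj_bc h'.symm, Set.ext fun w => by grind⟩
  by_cases hvd : v = d
  · subst hvd
    exact Or.inl ⟨b, a, h.adj_bd.symm, fun h' => h.not_adj_ad h'.symm, Set.ext fun w => by grind⟩
  exact Or.inr (Set.ext fun w => by grind)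

theorem deg_symmDiff_switchCycle [Finite V] (h : G.IsSwitchable a b c d) (v : V) :
    deg (G ∆ switchCycle a b c d) v = deg G v := by
  rw [deg, neighborSet_symmDiff]
  obtain ⟨p, q, hp, hq, hN⟩ | hN := h.neighborSet_switchCycle v
  · rw [hN]
    exact Set.ncard_symmDiff_pair hp hq
  · rw [hN, ← Set.bot_eq_empty, symmDiff_bot, deg]

theorem bipSwitch (h : G.IsSwitchable a b c d) (ha : a ∈ X) (hb : b ∈ X) (hc : c ∈ Y)
    (hd : d ∈ Y) : BipSwitch X Y G (G ∆ switchCycle a b c d) :=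
  ⟨a, b, c, d, ha, hb, hc, hd, h.ne_ab, h.ne_cd, h.adj_ac.ne, h.ne_ad, h.ne_bc, h.adj_bd.ne,
    h.adj_ac, h.adj_bd, h.not_adj_ad, h.not_adj_bc, h.switchedGraph_eq.symm⟩

theorem bipSwitch_symm (h : G.IsSwitchable a b c d) (ha : a ∈ X) (hb : b ∈ X) (hc : c ∈ Y)
    (hd : d ∈ Y) : BipSwitch X Y (G ∆ switchCycle a b c d) G := by
  simpa only [switchCycle_comm_right, symmDiff_symmDiff_cancel_right] using
    h.symmDiff_switchCycle.bipSwitch ha hb hd hc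

end IsSwitchable

theorem ncard_edgeSet_symmDiff_switchCycle_lt [Finite V] (hac : D.Adj a c) (hbc : D.Adj b c)
    (hbd : D.Adj b d) (hab : a ≠ b) (hcd : c ≠ d) :
    (D ∆ switchCycle a b c d).edgeSet.ncard < D.edgeSet.ncard := by
  rw [edgeSet_symmDiff]
  refine Set.ncard_symmDiff_lt ?_
  have hC : (switchCycle a b c d).edgeSet.ncard ≤ 4 := by
    classical
    refine (Set.ncard_le_ncard (edgeSet_fromEdgeSet _ ▸ Set.sdiff_subset)).trans ?_
    have h4 := Finset.card_le_four (a := s(a, c)) (b := s(b, d)) (c := s(a, d)) (d := s(b, c))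
    rw [← Set.ncard_coe_finset] at h4
    simpa using h4
  have h3 : ({s(a, c), s(b, c), s(b, d)} : Set (Sym2 V)).ncard = 3 := by
    rw [Set.ncard_eq_three]
    exact ⟨_, _, _, by simp [hab, hac.ne], by simp [hab, hbc.ne.symm], by simp [hcd, hbc.ne.symm],
      rfl⟩
  have hsub : {s(a, c), s(b, c), s(b, d)} ⊆ D.edgeSet ∩ (switchCycle a b c d).edgeSet := by
    rintro e (rfl | rfl | rfl)
    · exact ⟨hac, by simp [switchCycle, hac.ne]⟩
    · exact ⟨hbc, by simp [switchCycle, hbc.ne]⟩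
    · exact ⟨hbd, by simp [switchCycle, hbd.ne]⟩
  have := Set.ncard_le_ncard hsub
  omega

theorem deg_sdiff_eq_deg_sdiff [Finite V] (h : deg H v = deg H' v) :
    deg (H \ H') v = deg (H' \ H) v := by
  rwa [deg, deg, Set.ncard_eq_ncard_iff_ncard_sdiff_eq_ncard_sdiff] at h

theorem exists_sdiff_adj_of_sdiff_adj [Finite V] (h : deg H v = deg H' v)
    (hvw : (H \ H').Adj v w) : ∃ u, (H' \ H).Adj v u := by
  have hpos : 0 < deg (H \ H') v := (Set.ncard_pos).2 ⟨w, hvw⟩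
  rw [deg_sdiff_eq_deg_sdiff h] at hpos
  exact Set.nonempty_of_ncard_ne_zero hpos.ne'

theorem sdiff_eq_bot_of_sdiff_eq_bot [Finite V] (hdeg : ∀ v, deg H v = deg H' v)
    (h : H' \ H = ⊥) : H \ H' = ⊥ := by
  by_contra hne
  obtain ⟨v, w, hvw⟩ := ne_bot_iff_exists_adj.1 hne
  obtain ⟨u, hu⟩ := exists_sdiff_adj_of_sdiff_adj (hdeg v) hvw
  rw [h] at hu
  exact hu

theorem exists_mem_sdiff_adj [Finite V] (hH' : H'.IsBipartiteWith X Y)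
    (hdeg : ∀ v, deg H v = deg H' v) (hne : H ≠ H') : ∃ x ∈ X, ∃ y, (H' \ H).Adj x y := by
  have hbot : H' \ H ≠ ⊥ := fun h => hne <|
    le_antisymm (sdiff_eq_bot_iff.1 (sdiff_eq_bot_of_sdiff_eq_bot hdeg h)) (sdiff_eq_bot_iff.1 h)
  obtain ⟨u, w, huw⟩ := ne_bot_iff_exists_adj.1 hbot
  rcases (hH'.mono sdiff_le).mem_of_adj huw with ⟨hu, -⟩ | ⟨-, hw⟩
  · exact ⟨u, hu, w, huw⟩
  · exact ⟨w, hw, u, huw.symm⟩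

theorem exists_alternating_path [Finite V] (hH : H.IsBipartiteWith X Y)
    (hH' : H'.IsBipartiteWith X Y) (hdeg : ∀ v, deg H v = deg H' v) (hne : H ≠ H') :
    ∃ x₁ ∈ X, ∃ x₂ ∈ X, ∃ y₁ ∈ Y, ∃ y₂ ∈ Y, (H \ H').Adj x₁ y₁ ∧ (H' \ H).Adj x₂ y₁ ∧
      (H \ H').Adj x₂ y₂ ∧ ¬(H \ H').Adj x₁ y₂ := by
  set S := {x ∈ X | ∃ y, (H' \ H).Adj x y}
  obtain ⟨x₂, ⟨hx₂, y₁, h₂₁⟩, hmax⟩ :=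
    S.toFinite.exists_maximalFor (deg (H \ H')) S (exists_mem_sdiff_adj hH' hdeg hne)
  have hy₁ : y₁ ∈ Y := (hH'.mono sdiff_le).mem_of_mem_adj hx₂ h₂₁
  obtain ⟨x₁, h₁₁⟩ := exists_sdiff_adj_of_sdiff_adj (hdeg y₁).symm h₂₁.symm
  have hx₁ : x₁ ∈ X := (hH.mono sdiff_le).mem_of_mem_adj' hy₁ h₁₁.symm
  obtain ⟨y₂, h₂₂, h₁₂⟩ : ∃ y₂, (H \ H').Adj x₂ y₂ ∧ ¬(H \ H').Adj x₁ y₂ := by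
    -- otherwise the red neighbourhood of `x₁` strictly contains that of `x₂`
    by_contra! hsub
    have hlt : deg (H \ H') x₂ < deg (H \ H') x₁ :=
      Set.ncard_lt_ncard ⟨hsub, fun h => h₂₁.2 (h h₁₁.symm).1⟩
    have hx₁S : x₁ ∈ S := ⟨hx₁, exists_sdiff_adj_of_sdiff_adj (hdeg x₁) h₁₁.symm⟩
    exact hlt.not_ge (hmax hx₁S hlt.le)
  exact ⟨x₁, hx₁, x₂, hx₂, y₁, hy₁, y₂, (hH.mono sdiff_le).mem_of_mem_adj hx₂ h₂₂, h₁₁.symm, h₂₁,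
    h₂₂, h₁₂⟩

theorem reflTransGen_bipSwitch_of_deg_eq [Finite V] (hH : H.IsBipartiteWith X Y)
    (hH' : H'.IsBipartiteWith X Y) (hdeg : ∀ v, deg H v = deg H' v) :
    Relation.ReflTransGen (BipSwitch X Y) H H' := by
  induction hn : (H ∆ H').edgeSet.ncard using Nat.strong_induction_on generalizing H H' with
  | _ n ih =>
  obtain rfl | hne := eq_or_ne H H'
  · exact .refl
  obtain ⟨x₁, hx₁, x₂, hx₂, y₁, hy₁, y₂, hy₂, h₁₁, h₂₁, h₂₂, h₁₂⟩ :=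
    exists_alternating_path hH hH' hdeg hne
  have hC : ((H ∆ H') ∆ switchCycle x₁ x₂ y₁ y₂).edgeSet.ncard < n :=
    hn ▸ ncard_edgeSet_symmDiff_switchCycle_lt (Or.inl h₁₁) (Or.inr h₂₁) (Or.inl h₂₂)
      (fun h => h₂₁.2 (h ▸ h₁₁.1)) (fun h => h₂₁.2 (h ▸ h₂₂.1))
  have hC_bip := switchCycle_isBipartiteWith hH.disjoint hx₁ hx₂ hy₁ hy₂
  by_cases h : H.Adj x₁ y₂
  · have hs : H'.IsSwitchable x₂ x₁ y₁ y₂ :=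
      ⟨h₂₁.1, not_not.1 (not_and.1 h₁₂ h), h₂₂.2, h₁₁.2, h₂₂.1.ne, h₁₁.1.ne⟩
    rw [← switchCycle_comm_left] at hC hC_bip
    refine .tail (ih _ ?_ hH (hH'.symmDiff hC_bip) (fun v => (hdeg v).trans
      (hs.deg_symmDiff_switchCycle v).symm) rfl) (hs.bipSwitch_symm hx₂ hx₁ hy₁ hy₂)
    rwa [← symmDiff_assoc]
  · have hs : H.IsSwitchable x₁ x₂ y₁ y₂ :=
      ⟨h₁₁.1, h₂₂.1, h, h₂₁.2, hH.disjoint.ne_of_mem hx₁ hy₂, h₂₁.1.ne⟩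
    refine .head (hs.bipSwitch hx₁ hx₂ hy₁ hy₂) (ih _ ?_ (hH.symmDiff hC_bip) hH'
      (fun v => (hs.deg_symmDiff_switchCycle v).trans (hdeg v)) rfl)
    rwa [symmDiff_right_comm]

end SimpleGraph

theorem stmt8_general {V : Type*} [Fintype V] (X Y : Set V)
    (hdisj : Disjoint X Y)
    (H H' : SimpleGraph V)
    (hH : ∀ u w, H.Adj u w → (u ∈ X ∧ w ∈ Y) ∨ (u ∈ Y ∧ w ∈ X))
    (hH' : ∀ u w, H'.Adj u w → (u ∈ X ∧ w ∈ Y) ∨ (u ∈ Y ∧ w ∈ X))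
    (hdeg : ∀ v, deg H v = deg H' v) :
    Relation.ReflTransGen (BipSwitch X Y) H H' :=
  reflTransGen_bipSwitch_of_deg_eq ⟨hdisj, hH⟩ ⟨hdisj, hH'⟩ hdeg

/-- Two bipartitioned graphs with the same partite sets `X`, `Y` and the same degrees
at every vertex can be transformed into one another by a finite sequence of
2-switches each involving two vertices of `X` and two vertices of `Y`; in particular,
every intermediate graph is bipartite with partite sets `X` and `Y`. -/
theorem stmt8 {V : Type*} [Fintype V] (X Y : Set V)
    (hdisj : Disjoint X Y) (hunion : X ∪ Y = Set.univ)
    (H H' : SimpleGraph V)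
    (hH : ∀ u w, H.Adj u w → (u ∈ X ∧ w ∈ Y) ∨ (u ∈ Y ∧ w ∈ X))
    (hH' : ∀ u w, H'.Adj u w → (u ∈ X ∧ w ∈ Y) ∨ (u ∈ Y ∧ w ∈ X))
    (hdeg : ∀ v, deg H v = deg H' v) :
    Relation.ReflTransGen (BipSwitch X Y) H H' :=
  stmt8_general X Y hdisj H H' hH hH' hdeg
end

section
/- Let G be a finite simple graph, and for each nonnegative integer k let V_k denote the set of vertices of G of degree k. Then G is the unique labeled realization of its neighborhood degree list (i.e., every simple graph H on the same vertex set with NDL_H(v) = NDL_G(v) for all vertices v satisfies H = G) if and only if both of the following hold: (a) for every k, the induced subgraph G[V_k] is the unique graph on vertex set V_k in which every vertex has its given degree (every graph on V_k in which each vertex has the same degree as it has in G[V_k] equals G[V_k]); (b) for every pair of distinct values k and ℓ, the bipartite graph G[V_k, V_ℓ] is the unique bipartite graph with partite sets V_k and V_ℓ in which every vertex has its given degree (every bipartite graph on V_k ∪ V_ℓ with all edges joining V_k to V_ℓ in which each vertex has the same degree as it has in G[V_k, V_ℓ] equals G[V_k, V_ℓ]). -/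
/-- The subgraph of `G` consisting precisely of the edges of `G` joining `s` to `t`. -/
def crossGraph {V : Type*} (G : SimpleGraph V) (s t : Set V) : SimpleGraph V where
  Adj u w := G.Adj u w ∧ ((u ∈ s ∧ w ∈ t) ∨ (u ∈ t ∧ w ∈ s))
  symm := ⟨fun u w h => ⟨h.1.symm, by tauto⟩⟩
  loopless := ⟨fun v h => G.irrefl h.1⟩


/-!
Two graphs have the same neighborhood degree lists exactly when every vertex has, in both,
equally many neighbors in each degree class `V_j` of `G` (the lengths of the lists force the
degrees to agree). Those counts are the degrees in the blocks `G[V_k]` and `G[V_k, V_ℓ]`, and a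
graph is the union of its blocks. So another realization of the degrees of one block, spliced
into `G` in place of that block, is another realization of the neighborhood degree lists; and
conversely another realization of the lists differs from `G` in some block, which keeps its
degrees.
-/

section Fibers

variable {V α : Type*}

@[simp]
lemma crossGraph_adj {G : SimpleGraph V} {S T : Set V} {u w : V} :
    (crossGraph G S T).Adj u w ↔ G.Adj u w ∧ ((u ∈ S ∧ w ∈ T) ∨ (u ∈ T ∧ w ∈ S)) :=
  Iff.rfl

lemma crossGraph_comm (G : SimpleGraph V) (S T : Set V) :
    crossGraph G S T = crossGraph G T S := by
  ext u w
  simp only [crossGraph_adj]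
  tauto

lemma induce_crossGraph_self (G : SimpleGraph V) (S : Set V) :
    (crossGraph G S S).induce S = G.induce S := by
  ext x y
  simp [x.2, y.2]

lemma neighborSet_crossGraph_fiber (G : SimpleGraph V) (f : V → α) (v : V) (j : α) :
    (crossGraph G {w | f w = f v} {w | f w = j}).neighborSet v
      = G.neighborSet v ∩ {w | f w = j} := by
  ext w
  simp only [SimpleGraph.mem_neighborSet, crossGraph_adj, Set.mem_ofPred_eq, Set.mem_inter_iff]
  grind

lemma eq_of_forall_crossGraph_fiber_eq {G H : SimpleGraph V} (f : V → α)
    (h : ∀ a b,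
      crossGraph H {w | f w = a} {w | f w = b} = crossGraph G {w | f w = a} {w | f w = b}) :
    H = G := by
  ext u w
  simpa using congrArg (fun L => L.Adj u w) (h (f u) (f w))

end Fibers

section NeighborhoodDegreeList

variable {V α : Type*}

lemma count_map_neighborSet [Finite V] [DecidableEq α] (G : SimpleGraph V) (f : V → α) (v : V)
    (j : α) :
    (((G.neighborSet v).toFinite.toFinset).val.map f).count j
      = (G.neighborSet v ∩ {w | f w = j}).ncard := by
  rw [Multiset.count_map,
    Set.ncard_eq_toFinset_card _ ((G.neighborSet v).toFinite.inter_of_left _),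
    ← Finset.filter_val, Finset.card_val]
  congr 1
  ext w
  simp [eq_comm]

lemma card_map_neighborSet [Finite V] (G : SimpleGraph V) (f : V → α) (v : V) :
    Multiset.card (((G.neighborSet v).toFinite.toFinset).val.map f) = deg G v := by
  rw [Multiset.card_map, deg, Set.ncard_eq_toFinset_card _ (G.neighborSet v).toFinite]
  rfl

lemma forall_NDL_eq_iff [Fintype V] {H G : SimpleGraph V} :
    (∀ v, NDL H v = NDL G v) ↔ ∀ v j, (H.neighborSet v ∩ {w | deg G w = j}).ncard
      = (G.neighborSet v ∩ {w | deg G w = j}).ncard := by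
  have hcount : ∀ v, ((H.neighborSet v).toFinite.toFinset).val.map (deg G) = NDL G v ↔
      ∀ j, (H.neighborSet v ∩ {w | deg G w = j}).ncard
        = (G.neighborSet v ∩ {w | deg G w = j}).ncard :=
    fun v => by simp only [Multiset.ext, NDL, count_map_neighborSet]
  have hdeg : ∀ g : V → ℕ, (∀ v, ((H.neighborSet v).toFinite.toFinset).val.map g = NDL G v) →
      deg H = deg G := fun g h => funext fun v => by
    rw [← card_map_neighborSet H g, h, NDL, card_map_neighborSet]
  constructor
  · intro h v
    refine (hcount v).1 ?_
    rw [← hdeg (deg H) h]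
    exact h v
  · intro h v
    have hmap := fun v => (hcount v).2 (h v)
    rw [NDL, hdeg _ hmap]
    exact hmap v

end NeighborhoodDegreeList

section Replacement

variable {V α : Type*}

lemma ncard_neighborSet_inter_fiber_replace {G K : SimpleGraph V} {f : V → α} {a b : α}
    (hK : ∀ u w, K.Adj u w → (f u = a ∧ f w = b) ∨ (f u = b ∧ f w = a))
    (hdeg : ∀ v, f v = a ∨ f v = b →
      deg K v = deg (crossGraph G {w | f w = a} {w | f w = b}) v) (v : V) (j : α) :
    ((G \ crossGraph G {w | f w = a} {w | f w = b} ⊔ K).neighborSet v ∩ {w | f w = j}).ncard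
      = (G.neighborSet v ∩ {w | f w = j}).ncard := by
  by_cases hblock : (f v = a ∧ j = b) ∨ (f v = b ∧ j = a)
  · have hK' : (G \ crossGraph G {w | f w = a} {w | f w = b} ⊔ K).neighborSet v ∩ {w | f w = j}
        = K.neighborSet v := by
      ext w
      have := hK v w
      simp only [Set.mem_inter_iff, SimpleGraph.mem_neighborSet, SimpleGraph.sup_adj,
        SimpleGraph.sdiff_adj, crossGraph_adj, Set.mem_ofPred_eq]
      grind
    have hG : G.neighborSet v ∩ {w | f w = j}
        = (crossGraph G {w | f w = a} {w | f w = b}).neighborSet v := by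
      ext w
      simp only [Set.mem_inter_iff, SimpleGraph.mem_neighborSet, crossGraph_adj,
        Set.mem_ofPred_eq]
      grind
    rw [hK', hG]
    exact hdeg v (by grind)
  · congr 1
    ext w
    have := hK v w
    simp only [Set.mem_inter_iff, SimpleGraph.mem_neighborSet, SimpleGraph.sup_adj,
      SimpleGraph.sdiff_adj, crossGraph_adj, Set.mem_ofPred_eq]
    grind

end Replacement

section Induce

variable {V : Type*} {U : Set V}

lemma deg_induce (G : SimpleGraph V) (x : U) :
    deg (G.induce U) x = (G.neighborSet x ∩ U).ncard := by
  rw [deg, ← Set.ncard_image_of_injective _ Subtype.val_injective]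
  congr 1
  ext w
  simp only [Set.mem_image, SimpleGraph.mem_neighborSet, SimpleGraph.comap_adj,
    Function.Embedding.subtype_apply, Set.mem_inter_iff]
  exact ⟨fun ⟨y, hy, hyw⟩ => hyw ▸ ⟨hy, y.2⟩, fun ⟨hw, hwU⟩ => ⟨⟨w, hwU⟩, hw, rfl⟩⟩

lemma deg_induce_of_adj_mem {G : SimpleGraph V} (x : U) (hU : ∀ w, G.Adj x w → w ∈ U) :
    deg (G.induce U) x = deg G x := by
  rw [deg_induce, Set.inter_eq_left.2 (show G.neighborSet x ⊆ U from hU), deg]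

lemma deg_map_subtype (F : SimpleGraph U) (x : U) :
    deg (F.map (Function.Embedding.subtype _)) x = deg F x := by
  rw [deg, deg, ← Set.ncard_image_of_injective _ Subtype.val_injective]
  congr 1
  ext w
  simp only [SimpleGraph.mem_neighborSet, SimpleGraph.map_adj, Function.Embedding.subtype_apply,
    Set.mem_image]
  exact ⟨fun ⟨y, z, h, hy, hz⟩ => ⟨z, Subtype.ext hy ▸ h, hz⟩,
    fun ⟨z, h, hz⟩ => ⟨x, z, h, rfl, hz⟩⟩

lemma eq_of_induce_eq {L L' : SimpleGraph V} (hL : ∀ u w, L.Adj u w → u ∈ U ∧ w ∈ U)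
    (hL' : ∀ u w, L'.Adj u w → u ∈ U ∧ w ∈ U) (h : L.induce U = L'.induce U) : L = L' := by
  ext u w
  have hUU : ∀ (hu : u ∈ U) (hw : w ∈ U), L.Adj u w ↔ L'.Adj u w := fun hu hw => by
    simpa using congrArg (fun F => F.Adj ⟨u, hu⟩ ⟨w, hw⟩) h
  exact ⟨fun huw => (hUU (hL u w huw).1 (hL u w huw).2).1 huw,
    fun huw => (hUU (hL' u w huw).1 (hL' u w huw).2).2 huw⟩

end Induce

section Blocks

variable {V : Type*}

lemma eq_induce_crossGraph_of_forall_NDL_eq [Fintype V] {G : SimpleGraph V}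
    (huniq : ∀ H : SimpleGraph V, (∀ v, NDL H v = NDL G v) → H = G) {a b : ℕ} {U : Set V}
    (hU : ∀ v, deg G v = a ∨ deg G v = b → v ∈ U) (F : SimpleGraph U)
    (hF : ∀ x y, F.Adj x y → (deg G x = a ∧ deg G y = b) ∨ (deg G x = b ∧ deg G y = a))
    (hdeg : ∀ x,
      deg F x = deg ((crossGraph G {v | deg G v = a} {v | deg G v = b}).induce U) x) :
    F = (crossGraph G {v | deg G v = a} {v | deg G v = b}).induce U := by
  set B := crossGraph G {v | deg G v = a} {v | deg G v = b}
  set K := F.map (Function.Embedding.subtype _)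
  have hK : ∀ u w, K.Adj u w → (deg G u = a ∧ deg G w = b) ∨ (deg G u = b ∧ deg G w = a) := by
    intro u w huw
    obtain ⟨x, y, h, rfl, rfl⟩ := (SimpleGraph.map_adj _ _ _ _).1 huw
    exact hF x y h
  have hdegK : ∀ v, deg G v = a ∨ deg G v = b → deg K v = deg B v := by
    intro v hv
    rw [show v = (⟨v, hU v hv⟩ : U) from rfl, deg_map_subtype, hdeg,
      deg_induce_of_adj_mem _ fun w hw => hU w (by grind [crossGraph_adj])]
  have hreplace : G \ B ⊔ K = G :=
    huniq _ (forall_NDL_eq_iff.2 (ncard_neighborSet_inter_fiber_replace hK hdegK))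
  have hKB : K = B := by
    calc K = crossGraph (G \ B ⊔ K) {v | deg G v = a} {v | deg G v = b} := by
          ext u w
          have := hK u w
          simp only [crossGraph_adj, SimpleGraph.sup_adj, SimpleGraph.sdiff_adj,
            Set.mem_ofPred_eq, B]
          grind
      _ = B := by rw [hreplace]
  rw [← SimpleGraph.comap_map_eq (Function.Embedding.subtype _) F]
  exact congrArg (SimpleGraph.comap _) hKB

lemma crossGraph_fiber_eq_of_forall_eq_induce {α : Type*} {G H : SimpleGraph V} {f : V → α}
    (hc : ∀ v j,
      (H.neighborSet v ∩ {w | f w = j}).ncard = (G.neighborSet v ∩ {w | f w = j}).ncard)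
    {a b : α} {U : Set V} (hU : ∀ v, f v = a ∨ f v = b → v ∈ U)
    (huniq : ∀ F : SimpleGraph U,
      (∀ x y, F.Adj x y → (f x = a ∧ f y = b) ∨ (f x = b ∧ f y = a)) →
      (∀ x, deg F x = deg ((crossGraph G {v | f v = a} {v | f v = b}).induce U) x) →
      F = (crossGraph G {v | f v = a} {v | f v = b}).induce U) :
    crossGraph H {v | f v = a} {v | f v = b} = crossGraph G {v | f v = a} {v | f v = b} := by
  have hdeg : ∀ v, deg (crossGraph H {v | f v = a} {v | f v = b}) v
      = deg (crossGraph G {v | f v = a} {v | f v = b}) v := by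
    intro v
    by_cases hva : f v = a
    · rw [deg, deg, ← hva, neighborSet_crossGraph_fiber, neighborSet_crossGraph_fiber, hc]
    by_cases hvb : f v = b
    · rw [deg, deg, crossGraph_comm H, crossGraph_comm G, ← hvb, neighborSet_crossGraph_fiber,
        neighborSet_crossGraph_fiber, hc]
    have hempty : ∀ L : SimpleGraph V,
        (crossGraph L {v | f v = a} {v | f v = b}).neighborSet v = ∅ :=
      fun L => Set.eq_empty_of_forall_notMem fun w hw => by simp_all
    rw [deg, deg, hempty, hempty]
  have hmem : ∀ L : SimpleGraph V, ∀ u w, (crossGraph L {v | f v = a} {v | f v = b}).Adj u w →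
      u ∈ U ∧ w ∈ U :=
    fun L u w h => ⟨hU u (by grind [crossGraph_adj]), hU w (by grind [crossGraph_adj])⟩
  refine eq_of_induce_eq (hmem H) (hmem G) (huniq _ ?_ fun x => ?_)
  · intro x y h
    exact h.2
  · rw [deg_induce_of_adj_mem x fun w hw => (hmem H x w hw).2,
      deg_induce_of_adj_mem x fun w hw => (hmem G x w hw).2, hdeg]

end Blocks

/-- A finite simple graph `G` is the unique labeled realization of its neighborhood
degree list iff (a) for every `k` the induced subgraph `G[V_k]` is the unique graph
on `V_k` with its degrees, and (b) for all distinct `k, ℓ` the bipartite graph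
`G[V_k, V_ℓ]` is the unique bipartitioned graph with partite sets `V_k`, `V_ℓ`
having its degrees. -/
theorem stmt10 {V : Type*} [Fintype V] (G : SimpleGraph V) :
    (∀ H : SimpleGraph V, (∀ v, NDL H v = NDL G v) → H = G) ↔
      ((∀ k : ℕ, ∀ F : SimpleGraph ↥{v : V | deg G v = k},
          (∀ x, deg F x = deg (G.induce {v : V | deg G v = k}) x) →
          F = G.induce {v : V | deg G v = k}) ∧
       (∀ k ℓ : ℕ, k ≠ ℓ →
          ∀ F : SimpleGraph ↥({v : V | deg G v = k} ∪ {v : V | deg G v = ℓ}),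
            (∀ x y, F.Adj x y →
              (deg G x.1 = k ∧ deg G y.1 = ℓ) ∨ (deg G x.1 = ℓ ∧ deg G y.1 = k)) →
            (∀ x, deg F x =
              deg ((crossGraph G {v : V | deg G v = k} {v : V | deg G v = ℓ}).induce
                ({v : V | deg G v = k} ∪ {v : V | deg G v = ℓ})) x) →
            F = (crossGraph G {v : V | deg G v = k} {v : V | deg G v = ℓ}).induce
                ({v : V | deg G v = k} ∪ {v : V | deg G v = ℓ}))) := by
  constructor
  · intro huniq
    refine ⟨fun k F hF => ?_, fun k ℓ _ F hFc hF =>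
      eq_induce_crossGraph_of_forall_NDL_eq huniq (fun _ => id) F hFc hF⟩
    rw [← induce_crossGraph_self] at hF ⊢
    exact eq_induce_crossGraph_of_forall_NDL_eq huniq (fun _ h => h.elim id id) F
      (fun x y _ => Or.inl ⟨x.2, y.2⟩) hF
  · rintro ⟨hwithin, hbetween⟩ H hH
    have hc := forall_NDL_eq_iff.1 hH
    refine eq_of_forall_crossGraph_fiber_eq (deg G) fun k ℓ => ?_
    rcases eq_or_ne k ℓ with rfl | hkℓ
    · refine crossGraph_fiber_eq_of_forall_eq_induce hc (U := {v | deg G v = k})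
        (fun _ h => h.elim id id) fun F _ hF => ?_
      rw [induce_crossGraph_self] at hF ⊢
      exact hwithin k F hF
    · exact crossGraph_fiber_eq_of_forall_eq_induce hc (fun _ => id) (hbetween k ℓ hkℓ)
end

section
/- Let G be a finite simple graph on vertices v_1,…,v_n with degree sequence d = (d_1,…,d_n) listed in nonincreasing order (deg_G(v_i) = d_i), and let m(d) = max{i : d_i ≥ i−1}. Then G is the only simple graph on its vertex set in which each vertex v_i has degree d_i (every graph H on the same vertex set with deg_H(v_i) = d_i for all i satisfies H = G) if and only if Σ_{i=1}^k d_i = k(k−1) + Σ_{i=k+1}^n min{k, d_i} for every k ∈ {1,…,m(d)}. -/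
open Finset

lemma Set.ncard_insert_sdiff_singleton {α : Type*} [Finite α] {s : Set α} {x y : α}
    (hx : x ∈ s) (hy : y ∉ s) : (insert y (s \ {x})).ncard = s.ncard := by
  rw [ncard_insert_of_notMem (fun h => hy h.1), ncard_sdiff_singleton_add_one hx]

lemma Finset.card_inter_eq_left_iff {α : Type*} [DecidableEq α] {s t : Finset α} :
    #(s ∩ t) = #s ↔ s ⊆ t := by
  refine ⟨fun h => inter_eq_left.1 (eq_of_subset_of_card_le inter_subset_left h.ge), fun h => ?_⟩
  rw [inter_eq_left.2 h]

lemma Finset.card_inter_eq_min_iff {α : Type*} [DecidableEq α] {s t : Finset α} :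
    #(s ∩ t) = min #s #t ↔ s ⊆ t ∨ t ⊆ s := by
  wlog hst : #s ≤ #t generalizing s t
  · rw [inter_comm, min_comm, or_comm]
    exact this (le_of_not_ge hst)
  rw [min_eq_left hst, card_inter_eq_left_iff, iff_self_or]
  exact fun hts => (eq_of_subset_of_card_le hts hst).ge

namespace SimpleGraph

variable {V : Type*} (G : SimpleGraph V)

lemma deg_eq_degree (v : V) [Fintype (G.neighborSet v)] : deg G v = G.degree v :=
  Set.ncard_eq_toFinset_card' _

/-- The vertex sets for which the Erdős–Gallai inequality is an equality,
see `sum_degree_eq_iff_isTightClique`. -/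
def IsTightClique (s : Finset V) : Prop :=
  G.IsClique (s : Set V) ∧ ∀ v ∉ s, (s : Set V) ⊆ G.neighborSet v ∨ G.neighborSet v ⊆ s

section TightClique

variable {G} [Finite V] {s : Finset V} {v : V}

lemma IsTightClique.neighborSet_subset (h : G.IsTightClique s) (hv : v ∉ s)
    (hdeg : deg G v ≤ #s) : G.neighborSet v ⊆ s := by
  refine (h.2 v hv).elim (fun hsub => ?_) id
  rw [Set.eq_of_subset_of_ncard_le hsub (by rwa [Set.ncard_coe_finset])]

lemma IsTightClique.subset_neighborSet (h : G.IsTightClique s) (hv : v ∉ s)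
    (hdeg : #s ≤ deg G v) : (s : Set V) ⊆ G.neighborSet v := by
  refine (h.2 v hv).elim id (fun hsub => ?_)
  rw [Set.eq_of_subset_of_ncard_le hsub (by rwa [Set.ncard_coe_finset])]

end TightClique

section Counting

variable [Fintype V] [DecidableEq V] [DecidableRel G.Adj]

lemma sum_degree_eq_sum_card_neighborFinset_inter (s : Finset V) :
    ∑ v ∈ s, G.degree v = ∑ v, #(G.neighborFinset v ∩ s) := by
  have := sum_card_bipartiteAbove_eq_sum_card_bipartiteBelow (s := s) (t := univ) (r := G.Adj)
  convert this using 2 with v _ w _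
  · rw [← card_neighborFinset_eq_degree, neighborFinset_eq_filter]
    rfl
  · congr 1
    ext u
    simp [bipartiteBelow, adj_comm, and_comm]

lemma neighborFinset_inter_eq_inter_erase (s : Finset V) (v : V) :
    G.neighborFinset v ∩ s = G.neighborFinset v ∩ s.erase v := by
  rw [inter_erase, erase_eq_of_notMem (by simp)]

lemma card_neighborFinset_inter_le_of_mem {s : Finset V} {v : V} (hv : v ∈ s) :
    #(G.neighborFinset v ∩ s) ≤ #s - 1 := by
  rw [neighborFinset_inter_eq_inter_erase, ← card_erase_of_mem hv]
  exact card_le_card inter_subset_right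

lemma card_neighborFinset_inter_le_min (s : Finset V) (v : V) :
    #(G.neighborFinset v ∩ s) ≤ min #s (G.degree v) := by
  rw [← card_neighborFinset_eq_degree, min_comm]
  exact le_min (card_le_card inter_subset_left) (card_le_card inter_subset_right)

theorem sum_degree_eq_iff_isTightClique (s : Finset V) :
    ∑ v ∈ s, G.degree v = #s * (#s - 1) + ∑ v ∈ sᶜ, min #s (G.degree v) ↔
      G.IsTightClique s := by
  have hin := fun v (hv : v ∈ s) => G.card_neighborFinset_inter_le_of_mem hv
  have hout := fun v (_ : v ∈ sᶜ) => G.card_neighborFinset_inter_le_min s v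
  rw [sum_degree_eq_sum_card_neighborFinset_inter, ← sum_add_sum_compl s, ← smul_eq_mul,
    ← sum_const, add_eq_add_iff_eq_and_eq (sum_le_sum hin) (sum_le_sum hout),
    sum_eq_sum_iff_of_le hin, sum_eq_sum_iff_of_le hout]
  refine and_congr ?_ ?_
  · have hcard : ∀ v ∈ s,
        #(G.neighborFinset v ∩ s) = #s - 1 ↔ s.erase v ⊆ G.neighborFinset v := fun v hv => by
      rw [neighborFinset_inter_eq_inter_erase, ← card_erase_of_mem hv, inter_comm,
        card_inter_eq_left_iff]
    simp +contextual only [hcard, IsClique, Set.Pairwise, subset_iff, mem_erase, mem_coe,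
      mem_neighborFinset]
    grind [adj_comm]
  · simp only [mem_compl]
    refine forall₂_congr fun v _ => ?_
    rw [← card_neighborFinset_eq_degree, min_comm, card_inter_eq_min_iff, ← coe_subset,
      ← coe_subset, coe_neighborFinset, or_comm]

end Counting

section Switch

def switch (a b c d : V) : SimpleGraph V :=
  fromEdgeSet (G.edgeSet \ {s(a, b), s(c, d)} ∪ {s(a, d), s(b, c)})

variable {G} {a b c d : V}

lemma switch_swap : G.switch b a d c = G.switch a b c d := by
  simp only [switch, Set.pair_comm, Sym2.eq_swap]

lemma switch_rotate : G.switch c d a b = G.switch a b c d := by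
  simp only [switch, Set.pair_comm, Sym2.eq_swap]

lemma switch_adj (had : Gᶜ.Adj a d) : (G.switch a b c d).Adj a d := by
  simp [switch, had.ne]

lemma neighborSet_switch_of_ne {v : V} (ha : v ≠ a) (hb : v ≠ b) (hc : v ≠ c) (hd : v ≠ d) :
    (G.switch a b c d).neighborSet v = G.neighborSet v := by
  ext w
  simpa [switch, ha, hb, hc, hd] using G.ne_of_adj

lemma neighborSet_switch_left (hab : G.Adj a b) (hcd : G.Adj c d) (had : Gᶜ.Adj a d) :
    (G.switch a b c d).neighborSet a = insert d (G.neighborSet a \ {b}) := by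
  have hac : a ≠ c := by
    rintro rfl
    exact had.2 hcd
  ext w
  have := G.ne_of_adj (a := a) (b := w)
  simp [switch, hab.ne, hac, had.ne]
  grind [compl_adj]

lemma deg_switch [Finite V] (hab : G.Adj a b) (hcd : G.Adj c d) (had : Gᶜ.Adj a d)
    (hbc : Gᶜ.Adj b c) (v : V) : deg (G.switch a b c d) v = deg G v := by
  have key : ∀ {a b c d : V}, G.Adj a b → G.Adj c d → Gᶜ.Adj a d →
      deg (G.switch a b c d) a = deg G a := fun hab hcd had => by
    rw [deg, deg, neighborSet_switch_left hab hcd had]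
    exact Set.ncard_insert_sdiff_singleton hab (had.2 ·)
  by_cases ha : v = a
  · rw [ha]
    exact key hab hcd had
  by_cases hb : v = b
  · rw [hb, ← switch_swap]
    exact key hab.symm hcd.symm hbc
  by_cases hc : v = c
  · rw [hc, ← switch_rotate]
    exact key hcd hab hbc.symm
  by_cases hd : v = d
  · rw [hd, ← switch_rotate, ← switch_swap]
    exact key hcd.symm hab.symm had.symm
  · rw [deg, deg, neighborSet_switch_of_ne ha hb hc hd]

lemma exists_ne_forall_deg_eq [Finite V] (hab : G.Adj a b) (hcd : G.Adj c d)
    (had : Gᶜ.Adj a d) (hbc : Gᶜ.Adj b c) : ∃ H : SimpleGraph V, H ≠ G ∧ ∀ v, deg H v = deg G v :=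
  ⟨G.switch a b c d, fun h => had.2 (h ▸ switch_adj had), deg_switch hab hcd had hbc⟩

end Switch

section Unique

variable {G} [Finite V]

lemma neighborSet_sdiff_subset_of_unique
    (huniq : ∀ H : SimpleGraph V, (∀ v, deg H v = deg G v) → H = G) {c i : V}
    (hdeg : deg G c ≤ deg G i) : G.neighborSet c \ {i} ⊆ G.neighborSet i := by
  intro x hx
  by_contra hix
  have hcard : (G.neighborSet c \ {i}).ncard ≤ (G.neighborSet i \ {c}).ncard := by
    by_cases hci : G.Adj c i
    · rw [Set.ncard_sdiff_singleton_of_mem (s := G.neighborSet c) hci,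
        Set.ncard_sdiff_singleton_of_mem (s := G.neighborSet i) hci.symm]
      exact Nat.sub_le_sub_right hdeg 1
    · rw [Set.sdiff_singleton_eq_self (s := G.neighborSet c) hci,
        Set.sdiff_singleton_eq_self (s := G.neighborSet i) (hci ·.symm)]
      exact hdeg
  obtain ⟨e, ⟨hie, hec⟩, he⟩ : ∃ e ∈ G.neighborSet i \ {c}, e ∉ G.neighborSet c \ {i} := by
    by_contra! hsub
    exact hix (Set.eq_of_subset_of_ncard_le hsub hcard ▸ hx).1
  have hce : ¬ G.Adj e c := fun h => he ⟨h.symm, hie.ne'⟩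
  obtain ⟨H, hne, hH⟩ := exists_ne_forall_deg_eq hie hx.1 ⟨Ne.symm hx.2, hix⟩ ⟨hec, hce⟩
  exact hne (huniq H hH)

lemma isTightClique_of_unique (huniq : ∀ H : SimpleGraph V, (∀ v, deg H v = deg G v) → H = G)
    {s : Finset V} (hs : ∀ v ∈ s, #s - 1 ≤ deg G v)
    (hout : ∀ v ∈ s, ∀ w ∉ s, deg G w ≤ deg G v) : G.IsTightClique s := by
  have hnest : ∀ {c i : V}, deg G c ≤ deg G i → G.neighborSet c \ {i} ⊆ G.neighborSet i :=
    neighborSet_sdiff_subset_of_unique huniq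
  refine ⟨fun i hi j hj hij => ?_, fun c hc => ?_⟩
  · by_contra hadj
    obtain ⟨x, hjx, hx⟩ : ∃ x ∈ G.neighborSet j, x ∉ s := by
      by_contra! hsub
      have hsub' : G.neighborSet j ⊆ ↑s \ {i} :=
        fun x hx => ⟨hsub x hx, fun (h : x = i) => hadj (h ▸ hx).symm⟩
      have hlt := Set.ncard_lt_ncard <|
        (Set.ssubset_iff_of_subset hsub').2 ⟨j, ⟨hj, hij.symm⟩, G.irrefl⟩
      rw [Set.ncard_sdiff_singleton_of_mem hi, Set.ncard_coe_finset] at hlt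
      have := hs j hj
      unfold deg at this
      omega
    exact hadj (hnest (hout i hi x hx) ⟨hjx.symm, hij.symm⟩)
  · by_contra! h
    obtain ⟨y, hy, hcy⟩ := Set.not_subset.1 h.1
    obtain ⟨x, hcx, hx⟩ := Set.not_subset.1 h.2
    have hyc : c ≠ y := fun h => hc (h ▸ hy)
    exact hcy (hnest (hout y hy x hx) ⟨hcx.symm, hyc⟩).symm

end Unique

end SimpleGraph

def ErdosGallaiEq {n : ℕ} (d : Fin n → ℕ) (k : Fin n) : Prop :=
  ∑ i ∈ univ.filter (fun i : Fin n => (i : ℕ) ≤ (k : ℕ)), d i =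
    ((k : ℕ) + 1) * (k : ℕ) +
      ∑ i ∈ univ.filter (fun i : Fin n => (k : ℕ) < (i : ℕ)), min ((k : ℕ) + 1) (d i)

namespace SimpleGraph

variable {n : ℕ} {G : SimpleGraph (Fin n)} {d : Fin n → ℕ}

lemma erdosGallaiEq_iff_isTightClique (hdeg : ∀ i, deg G i = d i) (k : Fin n) :
    ErdosGallaiEq d k ↔ G.IsTightClique (Iic k) := by
  classical
  obtain rfl : d = fun i => G.degree i :=
    funext fun i => (hdeg i).symm.trans (G.deg_eq_degree i)
  have hle : univ.filter (fun i : Fin n => (i : ℕ) ≤ k) = Iic k := by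
    ext
    simp
  have hlt : univ.filter (fun i : Fin n => (k : ℕ) < i) = (Iic k)ᶜ := by
    ext
    simp
  rw [ErdosGallaiEq, hle, hlt, ← sum_degree_eq_iff_isTightClique, Fin.card_Iic,
    Nat.add_sub_cancel]

lemma isTightClique_Iic_of_unique (hdeg : ∀ i, deg G i = d i) (hmono : Antitone d)
    (huniq : ∀ H : SimpleGraph (Fin n), (∀ i, deg H i = d i) → H = G) {k : Fin n}
    (hk : (k : ℕ) ≤ d k) : G.IsTightClique (Iic k) := by
  refine isTightClique_of_unique (fun H hH => huniq H fun i => (hH i).trans (hdeg i))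
    (fun v hv => ?_) (fun v hv w hw => ?_)
  · rw [Fin.card_Iic, Nat.add_sub_cancel, hdeg]
    exact hk.trans (hmono (mem_Iic.1 hv))
  · rw [hdeg, hdeg]
    exact hmono ((mem_Iic.1 hv).trans (not_le.1 (mt mem_Iic.2 hw)).le)

lemma adj_iff_lt_of_isTightClique_Iic (hdeg : ∀ i, deg G i = d i) (hmono : Antitone d)
    (htight : ∀ k : Fin n, (k : ℕ) ≤ d k → G.IsTightClique (Iic k)) {i j : Fin n}
    (hij : i < j) : G.Adj i j ↔ (i : ℕ) < d j := by
  have hij' : (i : ℕ) < j := hij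
  constructor
  · intro hadj
    by_contra! hji
    have hpos : 0 < d j := hdeg j ▸ (Set.ncard_pos).2 ⟨i, hadj.symm⟩
    let k : Fin n := ⟨d j - 1, by omega⟩
    have hk : (k : ℕ) = d j - 1 := rfl
    have hkj : k < j := Fin.lt_def.2 (by omega)
    have hsub := (htight k (by have := hmono hkj.le; omega)).neighborSet_subset (v := j)
      (fun h => (mem_Iic.1 h).not_gt hkj) (by rw [Fin.card_Iic, hdeg]; omega)
    have hik := Fin.le_def.1 (mem_Iic.1 (hsub hadj.symm))
    omega
  · intro hlt
    have hi : (i : ℕ) ≤ d i := hlt.le.trans (hmono hij.le)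
    refine ((htight i hi).subset_neighborSet (v := j) (by simpa using hij) ?_ (by simp)).symm
    rw [Fin.card_Iic, hdeg]
    omega

end SimpleGraph

open SimpleGraph

/-- `k : Fin n` is the `0`-indexed version of the `1`-indexed `k + 1`; since `d` is nonincreasing,
`k + 1 ≤ m(d)` is equivalent to `k ≤ d k`. -/
theorem stmt11 (n : ℕ) (G : SimpleGraph (Fin n)) (d : Fin n → ℕ)
    (hdeg : ∀ i, deg G i = d i) (hmono : Antitone d) :
    (∀ H : SimpleGraph (Fin n), (∀ i, deg H i = d i) → H = G) ↔
      ∀ k : Fin n, (k : ℕ) ≤ d k →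
        ∑ i ∈ Finset.univ.filter (fun i : Fin n => (i : ℕ) ≤ (k : ℕ)), d i =
          ((k : ℕ) + 1) * (k : ℕ) +
            ∑ i ∈ Finset.univ.filter (fun i : Fin n => (k : ℕ) < (i : ℕ)),
              min ((k : ℕ) + 1) (d i) := by
  constructor
  · intro huniq k hk
    exact (erdosGallaiEq_iff_isTightClique hdeg k).2
      (isTightClique_Iic_of_unique hdeg hmono huniq hk)
  · intro heg H hH
    have hadj : ∀ K : SimpleGraph (Fin n), (∀ i, deg K i = d i) →
        ∀ {i j : Fin n}, i < j → (K.Adj i j ↔ (i : ℕ) < d j) := fun K hK =>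
      adj_iff_lt_of_isTightClique_Iic hK hmono fun k hk =>
        (erdosGallaiEq_iff_isTightClique hK k).1 (heg k hk)
    ext i j
    rcases lt_trichotomy i j with h | rfl | h
    · rw [hadj H hH h, hadj G hdeg h]
    · simp
    · rw [H.adj_comm, G.adj_comm, hadj H hH h, hadj G hdeg h]
end

section
/- Let H be a finite simple bipartite graph with partite sets X = {x_1,…,x_p} and Y = {y_1,…,y_q} (every edge joining X to Y), let π = (π_1,…,π_p) with π_i = deg_H(x_i) be listed in nonincreasing order, and let ρ = (ρ_1,…,ρ_q) with ρ_j = deg_H(y_j) be listed in nonincreasing order. Let H* be the graph obtained from H by adding all edges between pairs of distinct vertices of X. Then H* is a threshold graph if and only if ρ = π*, i.e., ρ_i = |{j : π_j ≥ i}| for every i ≥ 1 (with ρ_i = 0 for i > q). -/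
def IsThreshold {V : Type*} (G : SimpleGraph V) : Prop :=
  ∃ (t : ℝ) (w : V → ℝ), ∀ u v : V, u ≠ v → (G.Adj u v ↔ t ≤ w u + w v)

/-!
Write `H*` as the split graph of the relation `r k j :⇔ x_k ~ y_j`: a clique on `X`, an
independent set `Y`, and the edges of `H` between them. Weights `w(x_k) = π_k`,
`w(y_j) = -j` with threshold `0` show that `H*` is threshold as soon as the rows of `r` are
initial segments `{1, …, π_k}` (a Ferrers diagram); the column sums of such a relation are
`π*`. Conversely, in a threshold graph the neighbourhoods of two vertices `y, y'` are nested
(compare their weights), so the columns of `r` form a chain under inclusion; as they are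
listed with nonincreasing sizes, every row is an initial segment. Finally, a relation whose
column sums are `π*` is a Ferrers diagram, by induction on the column: column `j` can only
contain rows with `π_k ≥ j`, and it has exactly as many rows as there are such `k`.
-/

open Finset Function

lemma Fin.mem_iff_lt_card_of_isLowerSet {n : ℕ} {s : Finset (Fin n)}
    (hs : IsLowerSet (s : Set (Fin n))) (j : Fin n) : j ∈ s ↔ (j : ℕ) < #s := by
  constructor
  · intro hj
    have := card_le_card fun i hi => hs (mem_Iic.mp hi) hj
    rw [Fin.card_Iic] at this
    omega
  · intro hj
    by_contra hjs
    have := card_le_card fun i (hi : i ∈ s) => mem_Iio.mpr <|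
      lt_of_not_ge fun hji => hjs (hs hji hi)
    rw [Fin.card_Iio] at this
    omega

lemma deg_eq_card_filter_of_neighborSet_subset_range {V γ : Type*} [Fintype γ]
    {G : SimpleGraph V} [DecidableRel G.Adj] {f : γ → V} (hf : Injective f) {v : V}
    (hv : G.neighborSet v ⊆ Set.range f) : deg G v = #{b | G.Adj v (f b)} := by
  rw [deg, ← Set.ncard_preimage_of_injective_subset_range hf hv, ← Set.ncard_coe_finset]
  congr 1
  ext b
  simp

lemma IsThreshold.neighborSet_diff_subset_or {V : Type*} {G : SimpleGraph V}
    (h : IsThreshold G) (u v : V) :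
    G.neighborSet u \ {v} ⊆ G.neighborSet v ∨ G.neighborSet v \ {u} ⊆ G.neighborSet u := by
  obtain ⟨t, w, hw⟩ := h
  have hmono : ∀ u v, w u ≤ w v → G.neighborSet u \ {v} ⊆ G.neighborSet v := by
    rintro u v huv x ⟨hux, hxv : x ≠ v⟩
    rw [SimpleGraph.mem_neighborSet] at hux ⊢
    rw [hw v x hxv.symm]
    linarith [(hw u x (G.ne_of_adj hux)).mp hux]
  exact (le_total (w u) (w v)).imp (hmono u v) (hmono v u)

section Ferrers

variable {α : Type*}

lemma isLowerSet_setOf_of_antitone_card [Fintype α] {β : Type*} [Preorder β]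
    {r : α → β → Prop} [DecidableRel r]
    (htotal : ∀ j₁ j₂, (∀ k, r k j₁ → r k j₂) ∨ (∀ k, r k j₂ → r k j₁))
    (hanti : Antitone fun j => #{k | r k j}) (k : α) : IsLowerSet {j | r k j} := by
  intro j j' hj' hk
  rcases htotal j j' with hsub | hsub
  · exact hsub k hk
  · have hcol : univ.filter (r · j') = univ.filter (r · j) :=
      eq_of_subset_of_card_le (fun k hk => by simpa using hsub k (by simpa using hk))
        (hanti hj')
    simpa using (Finset.ext_iff.mp hcol k).mpr (by simpa using hk)

variable {n : ℕ}

def IsFerrers (r : α → Fin n → Prop) [DecidableRel r] : Prop :=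
  ∀ k j, r k j ↔ (j : ℕ) < #{j' | r k j'}

variable {r : α → Fin n → Prop} [DecidableRel r]

lemma isFerrers_of_isLowerSet (h : ∀ k, IsLowerSet {j | r k j}) : IsFerrers r := by
  intro k j
  simpa using Fin.mem_iff_lt_card_of_isLowerSet (s := {j' | r k j'}) (by simpa using h k) j

lemma IsFerrers.card_filter [Fintype α] (h : IsFerrers r) (j : Fin n) :
    #{k | r k j} = #{k | (j : ℕ) < #{j' | r k j'}} := by
  simp_rw [h _ j]

lemma isFerrers_of_card_filter [Fintype α]
    (h : ∀ j, #{k | r k j} = #{k | (j : ℕ) < #{j' | r k j'}}) : IsFerrers r := by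
  intro k j
  induction j using WellFoundedLT.induction generalizing k with
  | _ j ih =>
  -- otherwise row `k` would contain `j` and, by `ih`, every column below its own length
  have hrow : ∀ k, r k j → (j : ℕ) < #{j' | r k j'} := by
    intro k hkj
    by_contra! hle
    have hsub : insert j (univ.filter fun j' : Fin n => (j' : ℕ) < #{j' | r k j'}) ⊆
        univ.filter (r k ·) := by
      intro i hi
      rcases mem_insert.mp hi with rfl | hi
      · simpa using hkj
      · simp only [mem_filter_univ] at hi ⊢
        exact (ih i (Fin.lt_def.mpr (by omega)) k).mpr hi
    have hcard := card_le_card hsub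
    rw [card_insert_of_notMem (by simpa using hle), Fin.card_filter_val_lt] at hcard
    have := card_le_univ {j' | r k j'}
    rw [Fintype.card_fin] at this
    omega
  have hcol : univ.filter (r · j) = univ.filter fun k => (j : ℕ) < #{j' | r k j'} :=
    eq_of_subset_of_card_le (fun k hk => by simpa using hrow k (by simpa using hk)) (h j).ge
  simpa using Finset.ext_iff.mp hcol k

end Ferrers

section SplitGraph

variable {α β : Type*}

def splitGraph (r : α → β → Prop) : SimpleGraph (α ⊕ β) where
  Adj
    | .inl k, .inl k' => k ≠ k'
    | .inl k, .inr j | .inr j, .inl k => r k j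
    | .inr _, .inr _ => False
  symm := ⟨by rintro (_ | _) (_ | _) h <;> simp_all [eq_comm]⟩
  loopless := ⟨by rintro (_ | _) h <;> simp_all⟩

variable {r : α → β → Prop}

@[simp] lemma splitGraph_adj_inl_inl {k k' : α} :
    (splitGraph r).Adj (.inl k) (.inl k') ↔ k ≠ k' :=
  .rfl

@[simp] lemma splitGraph_adj_inl_inr {k : α} {j : β} :
    (splitGraph r).Adj (.inl k) (.inr j) ↔ r k j :=
  .rfl

@[simp] lemma splitGraph_adj_inr_inl {k : α} {j : β} :
    (splitGraph r).Adj (.inr j) (.inl k) ↔ r k j :=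
  .rfl

@[simp] lemma splitGraph_not_adj_inr_inr {j j' : β} : ¬ (splitGraph r).Adj (.inr j) (.inr j') :=
  id

end SplitGraph

section SplitGraphThreshold

variable {α : Type*} {n : ℕ} {r : α → Fin n → Prop} [DecidableRel r]

theorem IsThreshold.isFerrers_of_splitGraph [Fintype α] (h : IsThreshold (splitGraph r))
    (hanti : Antitone fun j => #{k | r k j}) : IsFerrers r := by
  refine isFerrers_of_isLowerSet (isLowerSet_setOf_of_antitone_card (fun j₁ j₂ => ?_) hanti)
  refine (h.neighborSet_diff_subset_or (.inr j₁) (.inr j₂)).imp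
    (fun hsub k hk => ?_) (fun hsub k hk => ?_)
  · exact hsub (a := .inl k) ⟨hk, by simp⟩
  · exact hsub (a := .inl k) ⟨hk, by simp⟩

theorem isThreshold_splitGraph_of_isFerrers (h : IsFerrers r) : IsThreshold (splitGraph r) := by
  have hcast : ∀ a b : ℕ, a < b ↔ (0 : ℝ) ≤ b + -(a + 1) := by
    intro a b
    rw [← Nat.add_one_le_iff, ← Nat.cast_le (α := ℝ)]
    push_cast
    constructor <;> intro <;> linarith
  refine ⟨0, Sum.elim (fun k => #{j | r k j}) (fun j => -((j : ℕ) + 1)), ?_⟩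
  rintro (k | j) (k' | j') hne
  · simp only [splitGraph_adj_inl_inl, ne_eq, Sum.elim_inl]
    exact iff_of_true (by simpa using hne) (by positivity)
  · simp only [splitGraph_adj_inl_inr, Sum.elim_inl, Sum.elim_inr, h k j', hcast]
  · simp only [splitGraph_adj_inr_inl, Sum.elim_inl, Sum.elim_inr, h k' j, hcast, add_comm]
  · simp only [splitGraph_not_adj_inr_inr, Sum.elim_inr, false_iff, not_le]
    linarith [(j : ℕ).cast_nonneg (α := ℝ), (j' : ℕ).cast_nonneg (α := ℝ)]

end SplitGraphThreshold

section Bipartite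

variable {α β : Type*} {H : SimpleGraph (α ⊕ β)}

lemma deg_inl_eq_card_filter [Fintype β] [DecidableRel H.Adj]
    (hl : ∀ k k', ¬ H.Adj (.inl k) (.inl k')) (k : α) :
    deg H (.inl k) = #{j | H.Adj (.inl k) (.inr j)} := by
  refine deg_eq_card_filter_of_neighborSet_subset_range Sum.inr_injective ?_
  rintro (k' | j) hadj
  · exact absurd hadj (hl k k')
  · exact ⟨j, rfl⟩

lemma deg_inr_eq_card_filter [Fintype α] [DecidableRel H.Adj]
    (hr : ∀ j j', ¬ H.Adj (.inr j) (.inr j')) (j : β) :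
    deg H (.inr j) = #{k | H.Adj (.inl k) (.inr j)} := by
  simp_rw [H.adj_comm (.inl _)]
  refine deg_eq_card_filter_of_neighborSet_subset_range Sum.inl_injective ?_
  rintro (k | j') hadj
  · exact ⟨k, rfl⟩
  · exact absurd hadj (hr j j')

lemma sup_fromRel_isLeft_eq_splitGraph (hl : ∀ k k', ¬ H.Adj (.inl k) (.inl k'))
    (hr : ∀ j j', ¬ H.Adj (.inr j) (.inr j')) :
    H ⊔ SimpleGraph.fromRel (fun u w => u.isLeft = true ∧ w.isLeft = true) =
      splitGraph fun k j => H.Adj (.inl k) (.inr j) := by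
  ext (k | j) (k' | j') <;> simp [hl, hr, H.adj_comm (.inr _)]

end Bipartite

lemma card_filter_Icc_one_eq_card_filter_fin (p : ℕ) (P : ℕ → Prop) [DecidablePred P] :
    #{j ∈ Icc 1 p | P j} = #{k : Fin p | P (k + 1)} := by
  refine (card_bij (fun (k : Fin p) _ => (k : ℕ) + 1) (fun k hk => ?_)
    (fun a _ b _ h => ?_) fun j hj => ?_).symm
  · simp only [mem_filter, mem_univ, true_and, mem_Icc] at hk ⊢
    exact ⟨⟨by omega, k.isLt⟩, hk⟩
  · exact Fin.ext (by simpa using h)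
  · simp only [mem_filter, mem_Icc] at hj
    refine ⟨⟨j - 1, by omega⟩, ?_, by simp; omega⟩
    simpa [Nat.sub_add_cancel hj.1.1] using hj.2

lemma forall_eq_card_filter_Icc_iff {p q : ℕ} {π ρ : ℕ → ℕ}
    (hπ : ∀ k : Fin p, π (k + 1) ≤ q) (hρ : ∀ i, q < i → ρ i = 0) :
    (∀ i, 1 ≤ i → ρ i = #{j ∈ Icc 1 p | i ≤ π j}) ↔
      ∀ j : Fin q, ρ (j + 1) = #{k : Fin p | (j : ℕ) < π (k + 1)} := by
  simp only [card_filter_Icc_one_eq_card_filter_fin, Nat.lt_iff_add_one_le]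
  refine ⟨fun h j => h _ (by omega), fun h i hi => ?_⟩
  rcases le_or_gt i q with hiq | hqi
  · simpa [Nat.sub_add_cancel hi] using h ⟨i - 1, by omega⟩
  · rw [hρ i hqi, eq_comm, card_eq_zero, filter_eq_empty_iff]
    exact fun k _ => by linarith [hπ k]

theorem stmt13_general (p q : ℕ) (H : SimpleGraph (Fin p ⊕ Fin q))
    (hbip : ∀ u w, H.Adj u w →
      ((u.isLeft = true ∧ w.isLeft = false) ∨ (u.isLeft = false ∧ w.isLeft = true)))
    (π ρ : ℕ → ℕ)
    (hπdeg : ∀ i : Fin p, deg H (Sum.inl i) = π ((i : ℕ) + 1))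
    (hρdeg : ∀ j : Fin q, deg H (Sum.inr j) = ρ ((j : ℕ) + 1))
    (hρmono : ∀ i j, 1 ≤ i → i ≤ j → ρ j ≤ ρ i)
    (hρzero : ∀ j, q < j → ρ j = 0) :
    IsThreshold
        (H ⊔ SimpleGraph.fromRel (fun u w => u.isLeft = true ∧ w.isLeft = true)) ↔
      ∀ i : ℕ, 1 ≤ i → ρ i = ((Finset.Icc 1 p).filter (fun j => i ≤ π j)).card := by
  classical
  have hl : ∀ k k', ¬ H.Adj (.inl k) (.inl k') := fun k k' h => by simpa using hbip _ _ h
  have hr : ∀ j j', ¬ H.Adj (.inr j) (.inr j') := fun j j' h => by simpa using hbip _ _ h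
  set r : Fin p → Fin q → Prop := fun k j => H.Adj (.inl k) (.inr j)
  have hrow (k : Fin p) : #{j | r k j} = π (k + 1) := by rw [← hπdeg, deg_inl_eq_card_filter hl]
  have hcol (j : Fin q) : #{k | r k j} = ρ (j + 1) := by rw [← hρdeg, deg_inr_eq_card_filter hr]
  have hanti : Antitone fun j => #{k | r k j} := fun j₁ j₂ h => by
    simp only [hcol]
    exact hρmono _ _ (by omega) (by simpa using h)
  have hπq (k : Fin p) : π (k + 1) ≤ q := by simpa [hrow] using card_le_univ {j | r k j}
  rw [sup_fromRel_isLeft_eq_splitGraph hl hr, forall_eq_card_filter_Icc_iff hπq hρzero]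
  simp only [← hrow, ← hcol]
  exact ⟨fun h => (h.isFerrers_of_splitGraph hanti).card_filter,
    fun h => isThreshold_splitGraph_of_isFerrers (isFerrers_of_card_filter h)⟩

/-- For a bipartitioned graph `H` with partite sets `X = Fin p` (the left summands)
and `Y = Fin q` (the right summands) and nonincreasing degree lists `π` on `X` and
`ρ` on `Y` (given `1`-indexed, zero beyond their lengths), the graph `H*` obtained
by adding all edges inside `X` is a threshold graph iff `ρ = π*`, i.e.
`ρ i = |{j : π j ≥ i}|` for every `i ≥ 1`. -/
theorem stmt13 (p q : ℕ) (H : SimpleGraph (Fin p ⊕ Fin q))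
    (hbip : ∀ u w, H.Adj u w →
      ((u.isLeft = true ∧ w.isLeft = false) ∨ (u.isLeft = false ∧ w.isLeft = true)))
    (π ρ : ℕ → ℕ)
    (hπdeg : ∀ i : Fin p, deg H (Sum.inl i) = π ((i : ℕ) + 1))
    (hρdeg : ∀ j : Fin q, deg H (Sum.inr j) = ρ ((j : ℕ) + 1))
    (hπmono : ∀ i j, 1 ≤ i → i ≤ j → π j ≤ π i)
    (hρmono : ∀ i j, 1 ≤ i → i ≤ j → ρ j ≤ ρ i)
    (hπzero : ∀ j, p < j → π j = 0)
    (hρzero : ∀ j, q < j → ρ j = 0) :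
    IsThreshold
        (H ⊔ SimpleGraph.fromRel (fun u w => u.isLeft = true ∧ w.isLeft = true)) ↔
      ∀ i : ℕ, 1 ≤ i → ρ i = ((Finset.Icc 1 p).filter (fun j => i ≤ π j)).card :=
  stmt13_general p q H hbip π ρ hπdeg hρdeg hρmono hρzero
end
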